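/- arXiv:1402.0441 — 11 statements merged into one kernel-verified Lean document; each statement's English description precedes it below -/
import Mathlib

section
/- Let G be an abelian topological group whose topology is induced by a complete, translation-invariant metric d (i.e. d(a+c, b+c) = d(a,b) for all a,b,c ∈ G), and let h : ℕ → G. Define φ : Set ℕ → [0,∞] by φ(∅) = 0 and φ(A) = sup{ d(0, ∑_{n∈F} h(n)) : F a nonempty finite subset of A } for A ≠ ∅. Then φ is a lower semicontinuous submeasure on ℕ, and for every A ⊆ ℕ the series ∑_{n∈A} h(n) converges unconditionally in G if and only if A ∈ Exh(φ), i.e. φ(A \ [0,N)) → 0 as N → ∞. -/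
open Filter Topology

open scoped ENNReal

/-! `φ` is the supremum, over finite `F ⊆ A`, of `ν F = d(0, ∑_{n ∈ F} h n)`. Any such supremum
is monotone and lower semicontinuous, and it is subadditive as soon as `ν` is subadditive on
disjoint pairs, which is what translation invariance of `d` gives. Translation invariance also
makes `G` a complete uniform group, where unconditional convergence of `∑_{n ∈ A} h n` is the
Cauchy criterion: finite sums over `A \ [0, N)` become uniformly small as `N` grows. Those are
exactly the sums whose supremum is `φ (A \ [0, N))`. -/

section InvariantMetric

variable {G : Type*} [AddCommGroup G] [PseudoMetricSpace G]

theorem dist_add_left_of_dist_add_right (hinv : ∀ a b c : G, dist (a + c) (b + c) = dist a b)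
    (a b c : G) : dist (c + a) (c + b) = dist a b := by
  rw [add_comm c, add_comm c, hinv]

theorem dist_sub_sub_le_of_dist_add_right (hinv : ∀ a b c : G, dist (a + c) (b + c) = dist a b)
    (a b a' b' : G) : dist (a - b) (a' - b') ≤ dist a a' + dist b b' := by
  have hsub_left : dist (a' - b) (a' - b') = dist b b' :=
    calc dist (a' - b) (a' - b') = dist (a' - b + (b + b' - a')) (a' - b' + (b + b' - a')) :=
          (hinv _ _ _).symm
      _ = dist b' b := by congr 1 <;> abel
      _ = dist b b' := dist_comm _ _
  calc dist (a - b) (a' - b') ≤ dist (a - b) (a' - b) + dist (a' - b) (a' - b') :=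
        dist_triangle _ _ _
    _ = dist a a' + dist b b' := by rw [hsub_left, sub_eq_add_neg, sub_eq_add_neg a', hinv]

theorem isUniformAddGroup_of_dist_add_right
    (hinv : ∀ a b c : G, dist (a + c) (b + c) = dist a b) : IsUniformAddGroup G := by
  refine ⟨(LipschitzWith.of_dist_le_mul fun p q => ?_).uniformContinuous (K := 2)⟩
  have hfst : dist p.1 q.1 ≤ dist p q := Prod.dist_eq (x := p) ▸ le_max_left _ _
  have hsnd : dist p.2 q.2 ≤ dist p q := Prod.dist_eq (x := p) ▸ le_max_right _ _
  calc dist (p.1 - p.2) (q.1 - q.2) ≤ dist p.1 q.1 + dist p.2 q.2 :=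
        dist_sub_sub_le_of_dist_add_right hinv _ _ _ _
    _ ≤ 2 * dist p q := by linarith

theorem edist_zero_add_le_of_dist_add_right (hinv : ∀ a b c : G, dist (a + c) (b + c) = dist a b)
    (x y : G) : edist 0 (x + y) ≤ edist 0 x + edist 0 y :=
  calc edist 0 (x + y) ≤ edist 0 x + edist x (x + y) := edist_triangle _ _ _
    _ = edist 0 x + edist 0 y := by
        rw [edist_dist x, edist_dist 0 y, ← dist_add_left_of_dist_add_right hinv 0 y x,
          add_zero]

end InvariantMetric

section SupOfFinsets

variable {ι : Type*} (ν : Finset ι → ℝ≥0∞)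

noncomputable def supOfFinsets (A : Set ι) : ℝ≥0∞ :=
  ⨆ (F : Finset ι) (_ : ↑F ⊆ A), ν F

variable {ν}

theorem le_supOfFinsets {A : Set ι} {F : Finset ι} (hF : ↑F ⊆ A) : ν F ≤ supOfFinsets ν A :=
  le_iSup₂ (f := fun F (_ : ↑F ⊆ A) => ν F) F hF

theorem supOfFinsets_le_iff {A : Set ι} {c : ℝ≥0∞} :
    supOfFinsets ν A ≤ c ↔ ∀ F : Finset ι, ↑F ⊆ A → ν F ≤ c :=
  iSup₂_le_iff

theorem supOfFinsets_mono : Monotone (supOfFinsets ν) := fun _ _ hAB =>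
  supOfFinsets_le_iff.2 fun _ hF => le_supOfFinsets (hF.trans hAB)

theorem supOfFinsets_eq_iSup_nonempty (h0 : ν ∅ = 0) (A : Set ι) :
    supOfFinsets ν A = ⨆ (F : Finset ι) (_ : F.Nonempty ∧ ↑F ⊆ A), ν F := by
  refine le_antisymm (supOfFinsets_le_iff.2 fun F hF => ?_)
    (iSup₂_le fun F hF => le_supOfFinsets hF.2)
  rcases F.eq_empty_or_nonempty with rfl | hne
  · simp [h0]
  · exact le_iSup₂ (f := fun F (_ : F.Nonempty ∧ ↑F ⊆ A) => ν F) F ⟨hne, hF⟩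

theorem supOfFinsets_empty (h0 : ν ∅ = 0) : supOfFinsets ν ∅ = 0 :=
  le_antisymm (supOfFinsets_le_iff.2 fun F hF => by
    rw [Finset.coe_eq_empty.1 (Set.subset_empty_iff.1 hF), h0]) zero_le

theorem supOfFinsets_union_le [DecidableEq ι]
    (hν : ∀ F F', Disjoint F F' → ν (F ∪ F') ≤ ν F + ν F') (A B : Set ι) :
    supOfFinsets ν (A ∪ B) ≤ supOfFinsets ν A + supOfFinsets ν B := by
  classical
  refine supOfFinsets_le_iff.2 fun F hF => ?_
  rw [← F.filter_union_filter_not_eq (· ∈ A)]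
  refine (hν _ _ (F.disjoint_filter_filter_not F _)).trans
    (add_le_add (le_supOfFinsets ?_) (le_supOfFinsets ?_))
  · intro x hx
    exact (Finset.mem_filter.1 hx).2
  · intro x hx
    obtain ⟨hxF, hxA⟩ := Finset.mem_filter.1 hx
    exact (hF hxF).resolve_left hxA

theorem supOfFinsets_coe_lt_top (hν : ∀ F, ν F ≠ ⊤) (F : Finset ι) : supOfFinsets ν ↑F < ⊤ :=
  calc supOfFinsets ν ↑F ≤ F.powerset.sup ν :=
        supOfFinsets_le_iff.2 fun _ hF' =>
          Finset.le_sup (Finset.mem_powerset.2 (by exact_mod_cast hF'))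
    _ < ⊤ := (Finset.sup_lt_iff ENNReal.zero_lt_top).2 fun F' _ => (hν F').lt_top

theorem supOfFinsets_eq_iSup_supOfFinsets (A : Set ι) :
    supOfFinsets ν A = ⨆ (F : Finset ι) (_ : ↑F ⊆ A), supOfFinsets ν ↑F :=
  le_antisymm (iSup₂_mono fun _ _ => le_supOfFinsets subset_rfl)
    (iSup₂_le fun _ hF => supOfFinsets_mono hF)

theorem tendsto_supOfFinsets_diff_Iio_atTop_zero_iff [SemilatticeSup ι] [Nonempty ι]
    (A : Set ι) :
    Tendsto (fun N => supOfFinsets ν (A \ Set.Iio N)) atTop (𝓝 0) ↔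
      ∀ ε > 0, ∃ N, ∀ F : Finset ι, ↑F ⊆ A \ Set.Iio N → ν F ≤ ε := by
  have hanti : Antitone fun N => supOfFinsets ν (A \ Set.Iio N) := fun _ _ hMN =>
    supOfFinsets_mono (Set.sdiff_subset_sdiff_right (Set.Iio_subset_Iio hMN))
  simp only [ENNReal.tendsto_atTop_zero_iff_le_of_antitone hanti, supOfFinsets_le_iff]

end SupOfFinsets

theorem summable_subtype_iff_forall_sum_diff_Iio_mem {G : Type*} [AddCommGroup G]
    [UniformSpace G] [IsUniformAddGroup G] [CompleteSpace G] (f : ℕ → G) (A : Set ℕ) :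
    Summable (fun n : A => f n) ↔
      ∀ e ∈ 𝓝 (0 : G), ∃ N, ∀ F : Finset ℕ, ↑F ⊆ A \ Set.Iio N → ∑ n ∈ F, f n ∈ e := by
  classical
  have hsum (t : Finset ℕ) : ∑ n ∈ t, A.indicator f n = ∑ n ∈ t with n ∈ A, f n :=
    Finset.sum_indicator_eq_sum_filter t (fun _ => f) (fun _ => A) id
  refine (summable_subtype_iff_indicator.trans summable_iff_vanishing).trans <|
    forall₂_congr fun e _ => ⟨fun ⟨s, hs⟩ => ⟨s.sup id + 1, fun F hF => ?_⟩,
      fun ⟨N, hN⟩ => ⟨Finset.range N, fun t ht => ?_⟩⟩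
  · have hFs : Disjoint F s := Finset.disjoint_left.2 fun x hxF hxs =>
      (hF hxF).2 (Nat.lt_succ_of_le (Finset.le_sup (f := id) hxs))
    simpa [hsum, Finset.filter_true_of_mem fun x hx => (hF hx).1] using hs F hFs
  · refine hsum t ▸ hN _ fun x hx => ?_
    obtain ⟨hxt, hxA⟩ := Finset.mem_filter.1 hx
    exact ⟨hxA, fun hxN => Finset.disjoint_left.1 ht hxt (Finset.mem_range.2 hxN)⟩

/-- for `h : ℕ → G` in a complete abelian group with translation-invariant
metric, the function `φ(A) = sup { d(0, ∑_{n∈F} h n) : ∅ ≠ F ⊆ A finite }` is an lsc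
submeasure and unconditional convergence of `∑_{n∈A} h n` is equivalent to `A ∈ Exh(φ)`. -/
theorem stmt0 {G : Type*} [AddCommGroup G] [MetricSpace G] [CompleteSpace G]
    (hinv : ∀ a b c : G, dist (a + c) (b + c) = dist a b)
    (h : ℕ → G) (φ : Set ℕ → ENNReal)
    (hφ : ∀ A : Set ℕ,
      φ A = ⨆ (F : Finset ℕ) (_ : F.Nonempty ∧ ↑F ⊆ A),
        ENNReal.ofReal (dist (0 : G) (∑ n ∈ F, h n))) :
    φ ∅ = 0 ∧
    (∀ A B : Set ℕ, A ⊆ B → φ A ≤ φ B) ∧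
    (∀ A B : Set ℕ, φ (A ∪ B) ≤ φ A + φ B) ∧
    (∀ n : ℕ, φ {n} < ⊤) ∧
    (∀ A : Set ℕ, φ A = ⨆ (F : Finset ℕ) (_ : ↑F ⊆ A), φ ↑F) ∧
    (∀ A : Set ℕ, Summable (fun n : A => h n) ↔
      Tendsto (fun N : ℕ => φ (A \ Set.Iio N)) atTop (𝓝 0)) := by
  have := isUniformAddGroup_of_dist_add_right hinv
  set ν : Finset ℕ → ℝ≥0∞ := fun F => edist 0 (∑ n ∈ F, h n)
  have hν0 : ν ∅ = 0 := by simp [ν]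
  obtain rfl : φ = supOfFinsets ν := funext fun A => by
    rw [hφ, supOfFinsets_eq_iSup_nonempty hν0]
    simp only [ν, edist_dist]
  refine ⟨supOfFinsets_empty hν0, fun _ _ => (supOfFinsets_mono ·),
    supOfFinsets_union_le fun F F' hFF' => ?_, fun n => by
      simpa using supOfFinsets_coe_lt_top (fun _ => edist_ne_top _ _) {n},
    supOfFinsets_eq_iSup_supOfFinsets, fun A => ?_⟩
  · simpa only [ν, Finset.sum_union hFF'] using edist_zero_add_le_of_dist_add_right hinv _ _
  · rw [summable_subtype_iff_forall_sum_diff_Iio_mem,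
      tendsto_supOfFinsets_diff_Iio_atTop_zero_iff,
      Metric.nhds_basis_closedEBall.forall_iff fun _ _ hst hs => ?_]
    · simp only [Metric.mem_closedEBall, edist_comm, ν]
    · exact hs.imp fun N hN F hF => hst (hN F hF)
end

section
/- Let G be an abelian topological group whose topology is induced by a complete, translation-invariant metric d (i.e. d(a+c, b+c) = d(a,b) for all a,b,c ∈ G), and let h : ℕ → G. If (A_k)_{k∈ℕ} is a sequence of subsets of ℕ such that for every k the series ∑_{n∈A_k} h(n) converges unconditionally in G, then there exists A ⊆ ℕ such that ∑_{n∈A} h(n) converges unconditionally in G and A_k \ A is finite for every k. (In other words, the family of sets on which the series converges unconditionally is a P-ideal.) -/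
/-!
After replacing `A k` by `A 0 ∪ ⋯ ∪ A k`, the sets increase. A translation-invariant metric is
the distance of the norm `‖x‖ = d(x, 0)`, so the Cauchy criterion gives thresholds
`N 0 < N 1 < ⋯` such that every finite sum of `h` over `A k ∩ [N k, ∞)` has norm `< 2⁻ᵏ`. Let `B`
meet each block `[N j, N (j + 1))` in `A j`. Then `A k \ B ⊆ [0, N k)`, and a finite sum over
`B ∩ [N K, ∞)` splits into block sums of norms `< 2⁻ʲ` with `j ≥ K`, so its norm is `< 2¹⁻ᴷ`.
-/

open Filter Finset

section UniformAddGroup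

variable {ι G : Type*} [AddCommGroup G] [UniformSpace G] [IsUniformAddGroup G] [CompleteSpace G]
  {f : ι → G}

theorem Summable.indicator_union {s t : Set ι} (hs : Summable (s.indicator f))
    (ht : Summable (t.indicator f)) : Summable ((s ∪ t).indicator f) := by
  have hst : Summable ((s ∩ t).indicator f) := by
    simpa only [Set.indicator_indicator] using ht.indicator s
  convert (hs.add ht).sub hst using 1
  ext n
  rw [← Set.indicator_union_add_inter_apply, add_sub_cancel_right]

theorem Summable.indicator_accumulate {A : ℕ → Set ι}
    (hA : ∀ k, Summable ((A k).indicator f)) (k : ℕ) :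
    Summable ((Set.accumulate A k).indicator f) := by
  induction k with
  | zero => simpa only [Set.accumulate_zero_nat] using hA 0
  | succ k ih => simpa only [Set.accumulate_succ] using ih.indicator_union (hA (k + 1))

end UniformAddGroup

section SeminormedAddCommGroup

variable {G : Type*} [SeminormedAddCommGroup G] [CompleteSpace G] {f : ℕ → G}

theorem Summable.eventually_norm_sum_lt (hf : Summable f) {ε : ℝ} (hε : 0 < ε) :
    ∀ᶠ N in atTop, ∀ t : Finset ℕ, Disjoint t (range N) → ‖∑ n ∈ t, f n‖ < ε := by
  obtain ⟨s, hs⟩ := summable_iff_vanishing_norm.mp hf ε hε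
  filter_upwards [tendsto_finset_range.eventually (eventually_ge_atTop s)] with N hN t ht
  exact hs t (ht.mono_right hN)

theorem exists_summable_indicator_diff_finite_of_monotone {C : ℕ → Set ℕ} (hC : Monotone C)
    (hCf : ∀ k, Summable ((C k).indicator f)) :
    ∃ B : Set ℕ, Summable (B.indicator f) ∧ ∀ k, (C k \ B).Finite := by
  obtain ⟨N, hN_mono, hN⟩ := extraction_forall_of_eventually fun k =>
    (hCf k).eventually_norm_sum_lt (pow_pos (by norm_num : (0 : ℝ) < 2⁻¹) k)
  -- for `n ≥ N 0`, `idx n` is the `j` with `n ∈ [N j, N (j + 1))`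
  set idx : ℕ → ℕ := fun n => Nat.findGreatest (fun j => N j ≤ n) n
  have le_idx {k n : ℕ} (h : N k ≤ n) : k ≤ idx n :=
    Nat.le_findGreatest ((hN_mono.id_le k).trans h) h
  have N_idx_le {k n : ℕ} (h : N k ≤ n) : N (idx n) ≤ n :=
    Nat.findGreatest_spec (P := fun j => N j ≤ n) ((hN_mono.id_le k).trans h) h
  set B : Set ℕ := {n | n ∈ C (idx n)}
  refine ⟨B, summable_iff_vanishing_norm.mpr fun ε hε => ?_, fun k => ?_⟩
  · obtain ⟨K, hK⟩ := exists_pow_lt_of_lt_one (half_pos hε) (by norm_num : (2⁻¹ : ℝ) < 1)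
    refine ⟨range (N K), fun t ht => ?_⟩
    have hNt : ∀ n ∈ t, N K ≤ n := fun n hn => by simpa using disjoint_left.mp ht hn
    set J := t.image idx
    have hfiber : ∀ j ∈ J, ‖∑ n ∈ t with idx n = j, B.indicator f n‖ < 2⁻¹ ^ j := by
      intro j hj
      have hBC : ∑ n ∈ t with idx n = j, B.indicator f n
          = ∑ n ∈ t with idx n = j, (C j).indicator f n :=
        sum_congr rfl fun n hn => by rw [← (mem_filter.mp hn).2]; rfl
      rw [hBC]
      refine hN j _ (disjoint_left.mpr fun n hn => ?_)
      obtain ⟨hnt, rfl⟩ := mem_filter.mp hn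
      simpa using N_idx_le (hNt n hnt)
    have hJ : J ⊆ Ico K (J.sup id + 1) := fun j hj => by
      obtain ⟨n, hn, rfl⟩ := mem_image.mp hj
      exact mem_Ico.mpr ⟨le_idx (hNt n hn), Nat.lt_succ_of_le (le_sup (f := id) hj)⟩
    rw [← sum_fiberwise_of_maps_to fun n hn => mem_image_of_mem idx hn]
    calc ‖∑ j ∈ J, ∑ n ∈ t with idx n = j, B.indicator f n‖
        ≤ ∑ j ∈ J, ‖∑ n ∈ t with idx n = j, B.indicator f n‖ := norm_sum_le _ _
      _ ≤ ∑ j ∈ J, (2⁻¹ : ℝ) ^ j := sum_le_sum fun j hj => (hfiber j hj).le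
      _ ≤ ∑ j ∈ Ico K (J.sup id + 1), (2⁻¹ : ℝ) ^ j :=
        sum_le_sum_of_subset_of_nonneg hJ fun _ _ _ => by positivity
      _ ≤ 2⁻¹ ^ K / (1 - 2⁻¹) := geom_sum_Ico_le_of_lt_one (by norm_num) (by norm_num)
      _ < ε := by norm_num; linarith
  · refine (Set.finite_Iio (N k)).subset fun n ⟨hnC, hnB⟩ => ?_
    by_contra hn
    exact hnB (hC (le_idx (not_lt.mp hn)) hnC)

theorem exists_summable_indicator_diff_finite {A : ℕ → Set ℕ}
    (hA : ∀ k, Summable ((A k).indicator f)) :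
    ∃ B : Set ℕ, Summable (B.indicator f) ∧ ∀ k, (A k \ B).Finite := by
  obtain ⟨B, hB, hdiff⟩ := exists_summable_indicator_diff_finite_of_monotone
    Set.monotone_accumulate (Summable.indicator_accumulate hA)
  exact ⟨B, hB, fun k => (hdiff k).subset (Set.sdiff_subset_sdiff_left Set.subset_accumulate)⟩

end SeminormedAddCommGroup

abbrev NormedAddCommGroup.ofAddInvariantDist {G : Type*} [AddCommGroup G] [MetricSpace G]
    (hinv : ∀ a b c : G, dist (a + c) (b + c) = dist a b) : NormedAddCommGroup G :=
  { ‹AddCommGroup G›, ‹MetricSpace G› with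
    norm := fun x => dist x 0
    dist_eq := fun a b => by
      rw [dist_comm, ← hinv (-a + b) 0 a, neg_add_cancel_comm, zero_add] }

/-- in a complete abelian group with translation-invariant metric, the family
of sets on which `∑ h n` converges unconditionally is a P-ideal. -/
theorem stmt1 {G : Type*} [AddCommGroup G] [MetricSpace G] [CompleteSpace G]
    (hinv : ∀ a b c : G, dist (a + c) (b + c) = dist a b)
    (h : ℕ → G) (A : ℕ → Set ℕ)
    (hA : ∀ k : ℕ, Summable (fun n : A k => h n)) :
    ∃ B : Set ℕ, Summable (fun n : B => h n) ∧ ∀ k : ℕ, (A k \ B).Finite := by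
  let := NormedAddCommGroup.ofAddInvariantDist hinv
  obtain ⟨B, hB, hdiff⟩ :=
    exists_summable_indicator_diff_finite fun k => summable_subtype_iff_indicator.mp (hA k)
  exact ⟨B, summable_subtype_iff_indicator.mpr hB, hdiff⟩
end

section
/- Let φ be a lower semicontinuous submeasure on ℕ. Then there exist an abelian topological group G which is a Polish space (i.e. G carries instances of AddCommGroup, a topology making it a topological additive group, and PolishSpace) and a function h : ℕ → G such that for every A ⊆ ℕ: A ∈ Exh(φ) if and only if ∑_{n∈A} h(n) converges unconditionally in G. (Every ideal of the form Exh(φ) is representable in a Polish abelian group.) -/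
open Filter Topology

open scoped ENNReal

/-!
Give the finitely supported functions `ℕ →₀ ZMod 2` the group seminorm `f ↦ φ (supp f)` and
complete; this is a Polish group since `ℕ →₀ ZMod 2` is countable. Send `n` to the indicator of
`{n}`. A partial sum over a finite `t ⊆ A` is the indicator of `t`, of norm `φ t`, so by the
Cauchy criterion the series over `A` converges in the completion iff `φ t` is small for all
finite `t ⊆ A` avoiding some finite set. By lower semicontinuity this says that the tails
`φ (A \ [0, N))` tend to `0`.
-/

structure IsSubmeasure {α : Type*} (φ : Set α → ℝ≥0∞) : Prop where
  empty : φ ∅ = 0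
  mono : Monotone φ
  union_le : ∀ A B, φ (A ∪ B) ≤ φ A + φ B
  singleton_lt_top : ∀ a, φ {a} < ⊤

namespace IsSubmeasure

variable {α : Type*} {φ : Set α → ℝ≥0∞}

theorem finset_lt_top (hφ : IsSubmeasure φ) (F : Finset α) : φ F < ⊤ := by
  classical
  induction F using Finset.induction_on with
  | empty => simp [hφ.empty]
  | insert a s _ ih =>
    rw [Finset.coe_insert, Set.insert_eq]
    exact (hφ.union_le _ _).trans_lt (ENNReal.add_lt_top.2 ⟨hφ.singleton_lt_top a, ih⟩)

/-- `f ↦ φ (supp f)`; by `finset_lt_top`, taking `toReal` loses nothing. -/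
noncomputable def supportSeminorm (hφ : IsSubmeasure φ) (M : Type*) [AddCommGroup M] :
    AddGroupSeminorm (α →₀ M) where
  toFun f := (φ f.support).toReal
  map_zero' := by simp [hφ.empty]
  add_le' f g := by
    classical
    have hle : φ ↑(f + g).support ≤ φ ↑f.support + φ ↑g.support :=
      (hφ.mono (by exact_mod_cast Finsupp.support_add)).trans
        (by rw [Finset.coe_union]; exact hφ.union_le _ _)
    rw [← ENNReal.toReal_add (hφ.finset_lt_top _).ne (hφ.finset_lt_top _).ne]
    exact ENNReal.toReal_mono
      (ENNReal.add_lt_top.2 ⟨hφ.finset_lt_top _, hφ.finset_lt_top _⟩).ne hle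
  neg' f := by simp

theorem ofReal_supportSeminorm (hφ : IsSubmeasure φ) {M : Type*} [AddCommGroup M] (f : α →₀ M) :
    ENNReal.ofReal (hφ.supportSeminorm M f) = φ f.support :=
  ENNReal.ofReal_toReal (hφ.finset_lt_top _).ne

end IsSubmeasure

theorem Finsupp.support_sum_single_embedding {ι α M : Type*} [AddCommMonoid M] (g : ι ↪ α)
    {c : M} (hc : c ≠ 0) (t : Finset ι) :
    (∑ i ∈ t, Finsupp.single (g i) c).support = t.map g := by
  classical
  rw [Finsupp.support_sum_eq_biUnion]
  · ext; simp [hc, eq_comm]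
  · intro i j hij
    simpa [hc] using g.injective.ne hij

theorem UniformSpace.Completion.summable_coe_iff_cauchySeq_finset {ι E : Type*}
    [AddCommGroup E] [UniformSpace E] [IsUniformAddGroup E] (f : ι → E) :
    Summable (fun i => (f i : Completion E)) ↔ CauchySeq fun s : Finset ι => ∑ i ∈ s, f i := by
  have hsum : (fun s : Finset ι => ∑ i ∈ s, (f i : Completion E)) =
      toCompl ∘ fun s => ∑ i ∈ s, f i :=
    funext fun s => (map_sum toCompl f s).symm
  rw [summable_iff_cauchySeq_finset, hsum, CauchySeq, ← map_map]
  exact (isUniformInducing_coe E).cauchy_map_iff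

theorem cauchySeq_finset_iff_vanishing_enorm {ι E : Type*} [SeminormedAddCommGroup E]
    {f : ι → E} :
    (CauchySeq fun s : Finset ι => ∑ i ∈ s, f i) ↔
      ∀ ε > (0 : ℝ≥0∞), ∃ s : Finset ι, ∀ t, Disjoint t s → ‖∑ i ∈ t, f i‖ₑ < ε := by
  rw [cauchySeq_finset_iff_sum_vanishing, Metric.nhds_basis_eball.forall_iff]
  · simp only [Metric.mem_eball, edist_zero_right]
  · rintro s t hst ⟨s', hs'⟩
    exact ⟨s', fun t' ht' => hst <| hs' _ ht'⟩

theorem tendsto_diff_Iio_iff_vanishing {φ : Set ℕ → ℝ≥0∞} (hmono : Monotone φ)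
    (hlsc : ∀ A, φ A = ⨆ (F : Finset ℕ) (_ : ↑F ⊆ A), φ ↑F) (A : Set ℕ) :
    Tendsto (fun N => φ (A \ Set.Iio N)) atTop (𝓝 0) ↔
      ∀ ε > 0, ∃ s : Finset A, ∀ t : Finset A, Disjoint t s →
        φ (t.map (Function.Embedding.subtype (· ∈ A))) < ε := by
  classical
  constructor
  · intro h ε hε
    obtain ⟨N, hN⟩ := eventually_atTop.1 ((tendsto_order.1 h).2 ε hε)
    refine ⟨(Finset.range N).subtype (· ∈ A), fun t hts => (hmono ?_).trans_lt (hN N le_rfl)⟩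
    intro y hy
    obtain ⟨x, hxt, rfl⟩ := Finset.mem_map.1 hy
    refine ⟨x.2, fun hxN => Finset.disjoint_left.1 hts hxt ?_⟩
    simpa using hxN
  · intro h
    rw [ENNReal.tendsto_atTop_zero]
    intro ε hε
    obtain ⟨s, hs⟩ := h ε hε
    refine ⟨s.sup (fun x => x.1 + 1), fun N hN => ?_⟩
    rw [hlsc]
    refine iSup₂_le fun F hF => ?_
    have hFA : ∀ x ∈ F, x ∈ A := fun x hx => (hF hx).1
    rw [← Finset.subtype_map_of_mem hFA]
    refine (hs _ (Finset.disjoint_left.2 fun x hxF hxs => ?_)).le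
    have hxN : x.1 + 1 ≤ N := (Finset.le_sup hxs).trans hN
    exact (hF (Finset.mem_subtype.1 hxF)).2 (Set.mem_Iio.2 (by omega))

/-- every ideal of the form `Exh(φ)` for an lsc submeasure `φ` is representable
in a Polish abelian group. -/
theorem stmt2 (φ : Set ℕ → ENNReal)
    (h0 : φ ∅ = 0)
    (hmono : ∀ A B : Set ℕ, A ⊆ B → φ A ≤ φ B)
    (hsub : ∀ A B : Set ℕ, φ (A ∪ B) ≤ φ A + φ B)
    (hsing : ∀ n : ℕ, φ {n} < ⊤)
    (hlsc : ∀ A : Set ℕ, φ A = ⨆ (F : Finset ℕ) (_ : ↑F ⊆ A), φ ↑F) :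
    ∃ (G : Type) (_ : AddCommGroup G) (_ : TopologicalSpace G),
      IsTopologicalAddGroup G ∧ PolishSpace G ∧
      ∃ h : ℕ → G, ∀ A : Set ℕ,
        Tendsto (fun N : ℕ => φ (A \ Set.Iio N)) atTop (𝓝 0) ↔
          Summable (fun n : A => h n) := by
  have hφ : IsSubmeasure φ := ⟨h0, fun A B => hmono A B, hsub, hsing⟩
  let _ := (hφ.supportSeminorm (ZMod 2)).toSeminormedAddCommGroup
  refine ⟨UniformSpace.Completion (ℕ →₀ ZMod 2), inferInstance, inferInstance, inferInstance,
    inferInstance, fun n => (Finsupp.single n 1 : ℕ →₀ ZMod 2), fun A => ?_⟩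
  rw [tendsto_diff_Iio_iff_vanishing hφ.mono hlsc,
    UniformSpace.Completion.summable_coe_iff_cauchySeq_finset
      (fun n : A => Finsupp.single (n : ℕ) (1 : ZMod 2)),
    cauchySeq_finset_iff_vanishing_enorm]
  have hnorm (t : Finset A) : ‖∑ n ∈ t, Finsupp.single (n : ℕ) (1 : ZMod 2)‖ₑ =
      φ (t.map (Function.Embedding.subtype (· ∈ A))) := by
    rw [← ofReal_norm, ← Finsupp.support_sum_single_embedding _ (one_ne_zero (α := ZMod 2))]
    exact hφ.ofReal_supportSeminorm _
  simp only [hnorm]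
end

section
/- Let ℓ∞ denote the Banach space of bounded real sequences with the supremum norm (Mathlib's lp (fun _ : ℕ ↦ ℝ) ∞). Let h : ℕ → ℓ∞ and let h' : ℕ → ℓ∞ be defined coordinatewise by h'(n)(k) = |h(n)(k)|. Then for every A ⊆ ℕ: the series ∑_{n∈A} h(n) converges unconditionally in ℓ∞ if and only if ∑_{n∈A} h'(n) converges unconditionally in ℓ∞. -/
/-!
Both directions go through the Cauchy criterion, one coordinate at a time. Since
`|∑ x| ≤ ∑ |x|`, tails of the series of `|h|` dominate those of `h`. Conversely, at a
coordinate `k` a finite sum of `|h n k|` is the sum of `h n k` over the `n` with `h n k ≥ 0`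
minus the sum over the others, so it is bounded by twice the sup-norm of the sums of `h` over
subsets of the index set.
-/

open scoped ENNReal

theorem Finset.sum_abs_eq_sum_filter_nonneg_sub_sum_filter_neg {ι : Type*} (t : Finset ι)
    (x : ι → ℝ) :
    ∑ n ∈ t, |x n| = ∑ n ∈ t with 0 ≤ x n, x n - ∑ n ∈ t with ¬0 ≤ x n, x n := by
  rw [← Finset.sum_filter_add_sum_filter_not t (fun n => 0 ≤ x n), sub_eq_add_neg,
    ← Finset.sum_neg_distrib]
  congr 1 <;> refine Finset.sum_congr rfl fun n hn => ?_
  · exact abs_of_nonneg (Finset.mem_filter.1 hn).2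
  · exact abs_of_neg (not_le.1 (Finset.mem_filter.1 hn).2)

namespace lp

variable {α ι : Type*} {f g : ι → lp (fun _ : α => ℝ) ∞}

theorem coeFn_sum_apply {E : α → Type*} [∀ k, NormedAddCommGroup (E k)] {p : ℝ≥0∞}
    (f : ι → lp E p) (t : Finset ι) (k : α) : (∑ n ∈ t, f n : lp E p) k = ∑ n ∈ t, f n k := by
  rw [coeFn_sum, Finset.sum_apply]

theorem norm_sum_le_norm_sum_of_apply_eq_abs (hg : ∀ n k, g n k = |f n k|) (t : Finset ι) :
    ‖∑ n ∈ t, f n‖ ≤ ‖∑ n ∈ t, g n‖ := by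
  refine norm_le_of_forall_le (norm_nonneg _) fun k => ?_
  calc ‖(∑ n ∈ t, f n : lp (fun _ : α => ℝ) ∞) k‖
      = |∑ n ∈ t, f n k| := by rw [coeFn_sum_apply, Real.norm_eq_abs]
    _ ≤ ∑ n ∈ t, |f n k| := Finset.abs_sum_le_sum_abs _ _
    _ = (∑ n ∈ t, g n : lp (fun _ : α => ℝ) ∞) k := by simp only [hg, coeFn_sum_apply]
    _ ≤ ‖(∑ n ∈ t, g n : lp (fun _ : α => ℝ) ∞) k‖ := le_abs_self _
    _ ≤ ‖∑ n ∈ t, g n‖ := norm_apply_le_norm ENNReal.top_ne_zero _ k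

theorem norm_sum_le_two_mul_of_apply_eq_abs (hg : ∀ n k, g n k = |f n k|) {t : Finset ι}
    {B : ℝ} (hB : 0 ≤ B) (hf : ∀ u ⊆ t, ‖∑ n ∈ u, f n‖ ≤ B) :
    ‖∑ n ∈ t, g n‖ ≤ 2 * B := by
  classical
  have coord_le (u : Finset ι) (hu : u ⊆ t) (k : α) : |∑ n ∈ u, f n k| ≤ B := by
    calc |∑ n ∈ u, f n k| = ‖(∑ n ∈ u, f n : lp (fun _ : α => ℝ) ∞) k‖ := by
          rw [coeFn_sum_apply, Real.norm_eq_abs]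
      _ ≤ ‖∑ n ∈ u, f n‖ := norm_apply_le_norm ENNReal.top_ne_zero _ k
      _ ≤ B := hf u hu
  refine norm_le_of_forall_le (by positivity) fun k => ?_
  rw [coeFn_sum_apply, Real.norm_eq_abs]
  simp only [hg, Finset.sum_abs_eq_sum_filter_nonneg_sub_sum_filter_neg]
  calc _ ≤ |∑ n ∈ t with 0 ≤ f n k, f n k| + |∑ n ∈ t with ¬0 ≤ f n k, f n k| := abs_sub _ _
    _ ≤ B + B := add_le_add (coord_le _ (Finset.filter_subset _ _) k)
        (coord_le _ (Finset.filter_subset _ _) k)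
    _ = 2 * B := by ring

theorem summable_iff_summable_of_apply_eq_abs (hg : ∀ n k, g n k = |f n k|) :
    Summable f ↔ Summable g := by
  simp only [summable_iff_vanishing_norm]
  constructor
  · intro hf ε hε
    obtain ⟨s, hs⟩ := hf (ε / 3) (by positivity)
    refine ⟨s, fun t ht => ?_⟩
    have := norm_sum_le_two_mul_of_apply_eq_abs hg (by positivity) fun u hu =>
      (hs u (ht.mono_left hu)).le
    linarith
  · intro hg' ε hε
    obtain ⟨s, hs⟩ := hg' ε hε
    exact ⟨s, fun t ht => (norm_sum_le_norm_sum_of_apply_eq_abs hg t).trans_lt (hs t ht)⟩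

end lp

/-- replacing each coordinate of a sequence in `ℓ∞` by its absolute value does
not change the sets on which the series converges unconditionally. -/
theorem stmt3 (h h' : ℕ → lp (fun _ : ℕ => ℝ) ∞)
    (hh' : ∀ n k : ℕ, (h' n : ℕ → ℝ) k = |(h n : ℕ → ℝ) k|) :
    ∀ A : Set ℕ, (Summable (fun n : A => h n) ↔ Summable (fun n : A => h' n)) :=
  fun _ => lp.summable_iff_summable_of_apply_eq_abs fun n => hh' n
end

section
/- Let m : ℕ → ℕ → [0,∞) be a family of nonnegative mass functions such that sup_{k∈ℕ} m(k)(n) < ∞ for every n ∈ ℕ, so that h(n) := (m(k)(n))_{k∈ℕ} defines an element of ℓ∞, the Banach space of bounded real sequences with the supremum norm (Mathlib's lp (fun _ : ℕ ↦ ℝ) ∞). Define φ : Set ℕ → [0,∞] by φ(A) = sup_{k∈ℕ} ∑_{n∈A} m(k)(n). Then for every A ⊆ ℕ: the series ∑_{n∈A} h(n) converges unconditionally in ℓ∞ if and only if A ∈ Exh(φ), i.e. φ(A \ [0,N)) → 0 as N → ∞. (Every non-pathological analytic P-ideal, i.e. every ideal Exh(sup of countably many measures), is representable in a Banach space.) 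-/
/-!
For vectors with nonnegative coordinates, the sup-norm of a finite sum `∑_{n ∈ t} h n` is
`sup_k ∑_{n ∈ t} m k n`; taking the supremum over finite `t ⊆ A \ [0, N)` therefore gives exactly
`φ (A \ [0, N))`. By the Cauchy criterion, a series in a Banach space converges unconditionally
iff these suprema of norms of finite tail sums tend to `0`.
-/

open Filter Topology
open scoped ENNReal

theorem lp.enorm_eq_iSup_enorm {ι : Type*} {E : ι → Type*} [∀ i, NormedAddCommGroup (E i)]
    (f : lp E ∞) : ‖f‖ₑ = ⨆ i, ‖f i‖ₑ := by
  have hbdd : BddAbove (Set.range fun i => ‖f i‖₊) := by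
    refine ⟨‖f‖₊, ?_⟩
    rintro _ ⟨i, rfl⟩
    exact lp.norm_apply_le_norm ENNReal.top_ne_zero f i
  have hnn : ‖f‖₊ = ⨆ i, ‖f i‖₊ := NNReal.eq <| by
    rw [coe_nnnorm, NNReal.coe_iSup, lp.norm_eq_ciSup]; rfl
  simp only [enorm, hnn, ENNReal.coe_iSup hbdd]

theorem lp.iSup_enorm_sum_eq_iSup_tsum_of_nonneg {ι α : Type*}
    (f : α → lp (fun _ : ι => ℝ) ∞) (hf : ∀ a i, 0 ≤ f a i) :
    ⨆ t : Finset α, ‖∑ a ∈ t, f a‖ₑ = ⨆ i, ∑' a, ENNReal.ofReal (f a i) := by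
  have hsum (t : Finset α) : ‖∑ a ∈ t, f a‖ₑ = ⨆ i, ∑ a ∈ t, ENNReal.ofReal (f a i) := by
    rw [lp.enorm_eq_iSup_enorm]
    refine iSup_congr fun i => ?_
    rw [lp.coeFn_sum, Finset.sum_apply,
      Real.enorm_of_nonneg (Finset.sum_nonneg fun a _ => hf a i),
      ENNReal.ofReal_sum_of_nonneg fun a _ => hf a i]
  simp only [hsum, ENNReal.tsum_eq_iSup_sum]
  exact iSup_comm

theorem summable_iff_tendsto_iSup_enorm_sum_indicator_Ici {E : Type*}
    [SeminormedAddCommGroup E] [CompleteSpace E] (f : ℕ → E) :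
    Summable f ↔
      Tendsto (fun N => ⨆ t : Finset ℕ, ‖∑ n ∈ t, (Set.Ici N).indicator f n‖ₑ) atTop (𝓝 0) := by
  classical
  have hsum (N : ℕ) (t : Finset ℕ) :
      ∑ n ∈ t, (Set.Ici N).indicator f n = ∑ n ∈ t with N ≤ n, f n := by
    rw [Finset.sum_filter]; simp only [Set.indicator_apply, Set.mem_Ici]
  rw [summable_iff_vanishing]
  constructor
  · intro hf
    refine ENNReal.tendsto_nhds_zero.2 fun ε hε => ?_
    obtain ⟨s, hs⟩ := hf _ (Metric.eball_mem_nhds 0 hε)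
    obtain ⟨N₀, hN₀⟩ := s.exists_nat_subset_range
    filter_upwards [eventually_ge_atTop N₀] with N hN
    refine iSup_le fun t => ?_
    have hdisj : Disjoint (t.filter (N ≤ ·)) s :=
      Finset.disjoint_left.2 fun n hn hns =>
        (Finset.mem_filter.1 hn).2.not_gt ((Finset.mem_range.1 (hN₀ hns)).trans_le hN)
    rw [hsum, ← edist_zero_right]
    exact (hs _ hdisj).le
  · intro hf e he
    obtain ⟨ε, hε, hεe⟩ := Metric.nhds_basis_eball.mem_iff.1 he
    obtain ⟨N, hN⟩ := ((tendsto_order.1 hf).2 ε hε).exists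
    refine ⟨Finset.range N, fun t ht => hεe ?_⟩
    have htail : ∑ n ∈ t, f n = ∑ n ∈ t, (Set.Ici N).indicator f n := by
      rw [hsum, Finset.filter_true_of_mem]
      exact fun n hn => not_lt.1 fun hlt => Finset.disjoint_left.1 ht hn (Finset.mem_range.2 hlt)
    rw [Metric.mem_eball, edist_zero_right, htail]
    exact (le_iSup (fun t : Finset ℕ => ‖∑ n ∈ t, (Set.Ici N).indicator f n‖ₑ) t).trans_lt hN

theorem iSup_enorm_sum_indicator_eq_iSup_tsum (m : ℕ → ℕ → ℝ) (hm : ∀ k n : ℕ, 0 ≤ m k n)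
    (h : ℕ → lp (fun _ : ℕ => ℝ) ∞) (hh : ∀ n k : ℕ, (h n : ℕ → ℝ) k = m k n) (B : Set ℕ) :
    ⨆ t : Finset ℕ, ‖∑ n ∈ t, B.indicator h n‖ₑ = ⨆ k, ∑' n : B, ENNReal.ofReal (m k n) := by
  have hcoord (n k : ℕ) :
      ((B.indicator h n : lp (fun _ : ℕ => ℝ) ∞) : ℕ → ℝ) k = B.indicator (m k) n := by
    by_cases hn : n ∈ B <;> simp [hn, hh]
  have hnonneg (n k : ℕ) : 0 ≤ ((B.indicator h n : lp (fun _ : ℕ => ℝ) ∞) : ℕ → ℝ) k :=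
    hcoord n k ▸ Set.indicator_nonneg (fun n _ => hm k n) n
  rw [lp.iSup_enorm_sum_eq_iSup_tsum_of_nonneg _ hnonneg]
  refine iSup_congr fun k => ?_
  rw [tsum_subtype B fun n => ENNReal.ofReal (m k n)]
  refine tsum_congr fun n => ?_
  by_cases hn : n ∈ B <;> simp [hn, hh]

/-- if `φ = sup` of countably many measures given by mass functions
`m k : ℕ → [0,∞)` (uniformly bounded at every point, so that
`h n = (m k n)_k` is an element of `ℓ∞`), then `∑_{n∈A} h n` converges unconditionally in
`ℓ∞` iff `A ∈ Exh(φ)`. -/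
theorem stmt4 (m : ℕ → ℕ → ℝ) (hm : ∀ k n : ℕ, 0 ≤ m k n)
    (h : ℕ → lp (fun _ : ℕ => ℝ) ∞)
    (hh : ∀ n k : ℕ, (h n : ℕ → ℝ) k = m k n) :
    ∀ A : Set ℕ,
      Summable (fun n : A => h n) ↔
        Tendsto
          (fun N : ℕ => ⨆ k : ℕ, ∑' n : ↥(A \ Set.Iio N), ENNReal.ofReal (m k ↑n))
          atTop (𝓝 0) := by
  intro A
  have htail (N : ℕ) : (Set.Ici N).indicator (A.indicator h) = (A \ Set.Iio N).indicator h := by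
    rw [Set.indicator_indicator, Set.sdiff_eq, Set.compl_Iio, Set.inter_comm]
  refine (summable_subtype_iff_indicator (f := h)).trans ?_
  simp only [summable_iff_tendsto_iSup_enorm_sum_indicator_Ici, htail,
    iSup_enorm_sum_indicator_eq_iSup_tsum m hm h hh]
end

section
/- Let X be a real Banach space and h : ℕ → X. Define φ̃ : Set ℕ → [0,∞] by φ̃(∅) = 0 and φ̃(A) = sup{ ‖∑_{n∈F} h(n)‖ : F a nonempty finite subset of A }. Then there exists a sequence (m_j)_{j∈ℕ} of finitely supported functions m_j : ℕ → [0,∞) such that the function ψ : Set ℕ → [0,∞] defined by ψ(A) = sup_{j∈ℕ} ∑_{n∈A} m_j(n) satisfies φ̃(A) ≤ ψ(A) ≤ 2·φ̃(A) for every A ⊆ ℕ; consequently, for every A ⊆ ℕ, the series ∑_{n∈A} h(n) converges unconditionally in X if and only if ψ(A \ [0,N)) → 0 as N → ∞. (Every ideal representable in a Banach space equals Exh(ψ) for a non-pathological lsc submeasure ψ.) -/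
/-!
For a finite set `F`, take a functional `g_F` of norm at most one with
`g_F (∑_{n∈F} h n) = ‖∑_{n∈F} h n‖`, and put `m_F n = |g_F (h n)|` for `n ∈ F`. Then
`m_F(F) ≥ ‖∑_{n∈F} h n‖`, so `φ ≤ ψ`. Splitting any finite `S ⊆ A` by the sign of `g_F ∘ h`
writes `m_F(S) = g_F(∑_P h) - g_F(∑_Q h)` with `P, Q ⊆ A`, so `ψ ≤ 2φ`. Enumerating the
finite subsets of `ℕ` gives the sequence `m_j`. Unconditional convergence over `A` is the Cauchy
condition `φ(A \ [0, N)) → 0`, and the two-sided comparison transfers it to `ψ`.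
-/

open Filter Topology
open scoped ENNReal

section PartialSumNormSup

variable {ι X : Type*} [NormedAddCommGroup X]

noncomputable def partialSumNormSup (h : ι → X) (A : Set ι) : ℝ≥0∞ :=
  ⨆ (F : Finset ι) (_ : F.Nonempty ∧ ↑F ⊆ A), ENNReal.ofReal ‖∑ n ∈ F, h n‖

theorem partialSumNormSup_le_iff {h : ι → X} {A : Set ι} {c : ℝ≥0∞} :
    partialSumNormSup h A ≤ c ↔
      ∀ F : Finset ι, ↑F ⊆ A → ENNReal.ofReal ‖∑ n ∈ F, h n‖ ≤ c := by
  refine ⟨fun hc F hF => ?_, fun hc => iSup₂_le fun F hF => hc F hF.2⟩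
  rcases F.eq_empty_or_nonempty with rfl | hne
  · simp
  · exact (le_iSup₂ (f := fun (F : Finset ι) (_ : F.Nonempty ∧ ↑F ⊆ A) =>
      ENNReal.ofReal ‖∑ n ∈ F, h n‖) F ⟨hne, hF⟩).trans hc

theorem ofReal_norm_sum_le_partialSumNormSup {h : ι → X} {A : Set ι} {F : Finset ι}
    (hF : ↑F ⊆ A) : ENNReal.ofReal ‖∑ n ∈ F, h n‖ ≤ partialSumNormSup h A :=
  partialSumNormSup_le_iff.1 le_rfl F hF

theorem partialSumNormSup_indicator (h : ι → X) (A B : Set ι) :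
    partialSumNormSup (A.indicator h) B = partialSumNormSup h (A ∩ B) := by
  classical
  refine le_antisymm (partialSumNormSup_le_iff.2 fun F hF => ?_)
    (partialSumNormSup_le_iff.2 fun F hF => ?_)
  · simp only [Set.indicator_apply, ← Finset.sum_filter]
    refine ofReal_norm_sum_le_partialSumNormSup fun n hn => ?_
    simp only [Finset.coe_filter, Set.mem_ofPred_eq] at hn
    exact ⟨hn.2, hF hn.1⟩
  · rw [← Finset.sum_congr rfl fun n hn => Set.indicator_of_mem (hF hn).1 h]
    exact ofReal_norm_sum_le_partialSumNormSup (hF.trans Set.inter_subset_right)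

end PartialSumNormSup

theorem summable_iff_tendsto_partialSumNormSup_Ici {X : Type*} [NormedAddCommGroup X]
    [CompleteSpace X] {f : ℕ → X} :
    Summable f ↔ Tendsto (fun N => partialSumNormSup f (Set.Ici N)) atTop (𝓝 0) := by
  have disjoint_range_iff {t : Finset ℕ} {N : ℕ} :
      Disjoint t (Finset.range N) ↔ ↑t ⊆ Set.Ici N := by
    simp [Finset.disjoint_left, Set.subset_def]
  rw [summable_iff_vanishing_norm, ENNReal.tendsto_atTop_zero]
  constructor
  · intro hf ε hε
    obtain ⟨δ, -, hδ, hδε⟩ := ENNReal.lt_iff_exists_real_btwn.1 hε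
    obtain ⟨s, hs⟩ := hf δ (ENNReal.ofReal_pos.1 hδ)
    refine ⟨(s.sup id).succ, fun N hN => partialSumNormSup_le_iff.2 fun t ht => ?_⟩
    have hts : Disjoint t s :=
      (disjoint_range_iff.2 (ht.trans (Set.Ici_subset_Ici.2 hN))).mono_right
        (Finset.subset_range_sup_succ s)
    exact (ENNReal.ofReal_le_ofReal (hs t hts).le).trans hδε.le
  · intro hf ε hε
    obtain ⟨N, hN⟩ := hf (ENNReal.ofReal (ε / 2)) (ENNReal.ofReal_pos.2 (half_pos hε))
    refine ⟨Finset.range N, fun t ht => ?_⟩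
    have hle := (ofReal_norm_sum_le_partialSumNormSup (disjoint_range_iff.1 ht)).trans (hN N le_rfl)
    rw [ENNReal.ofReal_le_ofReal_iff (half_pos hε).le] at hle
    linarith

theorem ENNReal.tendsto_nhds_zero_iff_of_le_of_le_mul {α : Type*} {l : Filter α}
    {f g : α → ℝ≥0∞} {c : ℝ≥0∞} (hc : c ≠ ⊤) (hfg : ∀ x, f x ≤ g x)
    (hgf : ∀ x, g x ≤ c * f x) :
    Tendsto f l (𝓝 0) ↔ Tendsto g l (𝓝 0) := by
  refine ⟨fun hf => ?_, fun hg => ?_⟩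
  · have hcf : Tendsto (fun x => c * f x) l (𝓝 0) := by
      simpa using ENNReal.Tendsto.const_mul hf (Or.inr hc)
    exact tendsto_of_tendsto_of_tendsto_of_le_of_le tendsto_const_nhds hcf (fun _ => zero_le) hgf
  · exact tendsto_of_tendsto_of_tendsto_of_le_of_le tendsto_const_nhds hg (fun _ => zero_le) hfg

section NormingWeight

variable {ι X : Type*} [NormedAddCommGroup X] [NormedSpace ℝ X]

noncomputable def normingFunctional (x : X) : StrongDual ℝ X :=
  (exists_dual_vector'' ℝ x).choose

theorem norm_normingFunctional_le (x : X) : ‖normingFunctional x‖ ≤ 1 :=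
  (exists_dual_vector'' ℝ x).choose_spec.1

theorem normingFunctional_apply_self (x : X) : normingFunctional x x = ‖x‖ :=
  (exists_dual_vector'' ℝ x).choose_spec.2

theorem norm_sum_le_sum_abs_normingFunctional (h : ι → X) (F : Finset ι) :
    ‖∑ n ∈ F, h n‖ ≤ ∑ n ∈ F, |normingFunctional (∑ k ∈ F, h k) (h n)| :=
  calc ‖∑ n ∈ F, h n‖ = normingFunctional (∑ k ∈ F, h k) (∑ n ∈ F, h n) :=
        (normingFunctional_apply_self _).symm
    _ = ∑ n ∈ F, normingFunctional (∑ k ∈ F, h k) (h n) := map_sum _ _ _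
    _ ≤ _ := Finset.sum_le_sum fun _ _ => le_abs_self _

theorem ofReal_sum_abs_le_two_mul_partialSumNormSup {g : StrongDual ℝ X} (hg : ‖g‖ ≤ 1)
    (h : ι → X) {A : Set ι} {S : Finset ι} (hS : ↑S ⊆ A) :
    ENNReal.ofReal (∑ n ∈ S, |g (h n)|) ≤ 2 * partialSumNormSup h A := by
  classical
  have hsub (p : ι → Prop) [DecidablePred p] : ↑(S.filter p) ⊆ A :=
    (Finset.coe_subset.2 (Finset.filter_subset p S)).trans hS
  set P := S.filter fun n => 0 ≤ g (h n)
  set Q := S.filter fun n => ¬0 ≤ g (h n)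
  have hsplit : ∑ n ∈ S, |g (h n)| = g (∑ n ∈ P, h n) - g (∑ n ∈ Q, h n) := by
    rw [← Finset.sum_filter_add_sum_filter_not S (fun n => 0 ≤ g (h n)), map_sum, map_sum,
      sub_eq_add_neg, ← Finset.sum_neg_distrib]
    congr 1
    · exact Finset.sum_congr rfl fun n hn => abs_of_nonneg (Finset.mem_filter.1 hn).2
    · exact Finset.sum_congr rfl fun n hn => abs_of_neg (not_le.1 (Finset.mem_filter.1 hn).2)
  have hg_le (x : X) : |g x| ≤ ‖x‖ := by
    simpa [Real.norm_eq_abs] using g.le_of_opNorm_le hg x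
  have hreal : ∑ n ∈ S, |g (h n)| ≤ ‖∑ n ∈ P, h n‖ + ‖∑ n ∈ Q, h n‖ := by
    rw [hsplit]
    linarith [le_abs_self (g (∑ n ∈ P, h n)), neg_le_abs (g (∑ n ∈ Q, h n)),
      hg_le (∑ n ∈ P, h n), hg_le (∑ n ∈ Q, h n)]
  calc ENNReal.ofReal (∑ n ∈ S, |g (h n)|)
      ≤ ENNReal.ofReal ‖∑ n ∈ P, h n‖ + ENNReal.ofReal ‖∑ n ∈ Q, h n‖ :=
        (ENNReal.ofReal_le_ofReal hreal).trans ENNReal.ofReal_add_le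
    _ ≤ partialSumNormSup h A + partialSumNormSup h A :=
        add_le_add (ofReal_norm_sum_le_partialSumNormSup (hsub _))
          (ofReal_norm_sum_le_partialSumNormSup (hsub _))
    _ = 2 * partialSumNormSup h A := (two_mul _).symm

noncomputable def normingWeight (h : ι → X) (F : Finset ι) : ι → ℝ :=
  (F : Set ι).indicator fun n => |normingFunctional (∑ k ∈ F, h k) (h n)|

theorem normingWeight_nonneg (h : ι → X) (F : Finset ι) (n : ι) : 0 ≤ normingWeight h F n :=
  Set.indicator_nonneg (fun _ _ => abs_nonneg _) n

theorem finite_support_normingWeight (h : ι → X) (F : Finset ι) :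
    (Function.support (normingWeight h F)).Finite :=
  F.finite_toSet.subset (Set.support_indicator_subset)

theorem tsum_ofReal_normingWeight (h : ι → X) (F : Finset ι) (A : Set ι)
    [DecidablePred (· ∈ A)] :
    ∑' n : A, ENNReal.ofReal (normingWeight h F n) =
      ENNReal.ofReal (∑ n ∈ F with n ∈ A, |normingFunctional (∑ k ∈ F, h k) (h n)|) := by
  rw [ENNReal.ofReal_sum_of_nonneg fun _ _ => abs_nonneg _,
    tsum_subtype A fun n => ENNReal.ofReal (normingWeight h F n),
    tsum_eq_sum (s := F) fun n hn => by simp [normingWeight, hn], Finset.sum_filter]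
  refine Finset.sum_congr rfl fun n hn => ?_
  simp [normingWeight, hn, Set.indicator_apply]

theorem tsum_ofReal_normingWeight_le (h : ι → X) (F : Finset ι) (A : Set ι) :
    ∑' n : A, ENNReal.ofReal (normingWeight h F n) ≤ 2 * partialSumNormSup h A := by
  classical
  rw [tsum_ofReal_normingWeight]
  refine ofReal_sum_abs_le_two_mul_partialSumNormSup (norm_normingFunctional_le _) h fun n hn => ?_
  simp only [Finset.coe_filter, Set.mem_ofPred_eq] at hn
  exact hn.2

theorem ofReal_norm_sum_le_tsum_ofReal_normingWeight (h : ι → X) {F : Finset ι} {A : Set ι}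
    (hF : ↑F ⊆ A) :
    ENNReal.ofReal ‖∑ n ∈ F, h n‖ ≤ ∑' n : A, ENNReal.ofReal (normingWeight h F n) := by
  classical
  rw [tsum_ofReal_normingWeight, Finset.filter_true_of_mem hF]
  exact ENNReal.ofReal_le_ofReal (norm_sum_le_sum_abs_normingFunctional h F)

theorem partialSumNormSup_le_iSup_tsum_normingWeight {κ : Type*} {e : κ → Finset ι}
    (he : e.Surjective) (h : ι → X) (A : Set ι) :
    partialSumNormSup h A ≤ ⨆ j, ∑' n : A, ENNReal.ofReal (normingWeight h (e j) n) :=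
  partialSumNormSup_le_iff.2 fun F hF => by
    obtain ⟨j, rfl⟩ := he F
    exact (ofReal_norm_sum_le_tsum_ofReal_normingWeight h hF).trans
      (le_iSup (fun j => ∑' n : A, ENNReal.ofReal (normingWeight h (e j) n)) j)

end NormingWeight

/-- for a sequence `h` in a Banach space, the submeasure
`φ(A) = sup { ‖∑_{n∈F} h n‖ : ∅ ≠ F ⊆ A finite }` is, up to a factor 2, the supremum `ψ` of
countably many finitely supported measures; consequently unconditional convergence of
`∑_{n∈A} h n` is equivalent to `A ∈ Exh(ψ)`. -/
theorem stmt5 {X : Type*} [NormedAddCommGroup X] [NormedSpace ℝ X] [CompleteSpace X]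
    (h : ℕ → X) (φ : Set ℕ → ENNReal)
    (hφ : ∀ A : Set ℕ,
      φ A = ⨆ (F : Finset ℕ) (_ : F.Nonempty ∧ ↑F ⊆ A),
        ENNReal.ofReal ‖∑ n ∈ F, h n‖) :
    ∃ m : ℕ → ℕ → ℝ,
      (∀ j n : ℕ, 0 ≤ m j n) ∧
      (∀ j : ℕ, (Function.support (m j)).Finite) ∧
      (∀ A : Set ℕ,
        φ A ≤ (⨆ j : ℕ, ∑' n : A, ENNReal.ofReal (m j ↑n)) ∧
        (⨆ j : ℕ, ∑' n : A, ENNReal.ofReal (m j ↑n)) ≤ 2 * φ A) ∧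
      (∀ A : Set ℕ,
        Summable (fun n : A => h n) ↔
          Tendsto
            (fun N : ℕ => ⨆ j : ℕ, ∑' n : ↥(A \ Set.Iio N), ENNReal.ofReal (m j ↑n))
            atTop (𝓝 0)) := by
  obtain rfl : φ = partialSumNormSup h := funext hφ
  have he : (Denumerable.ofNat (Finset ℕ)).Surjective :=
    (Denumerable.eqv (Finset ℕ)).symm.surjective
  set m : ℕ → ℕ → ℝ := fun j => normingWeight h (Denumerable.ofNat (Finset ℕ) j)
  have hψ (A : Set ℕ) :
      partialSumNormSup h A ≤ ⨆ j, ∑' n : A, ENNReal.ofReal (m j n) ∧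
        ⨆ j, ∑' n : A, ENNReal.ofReal (m j n) ≤ 2 * partialSumNormSup h A :=
    ⟨partialSumNormSup_le_iSup_tsum_normingWeight he h A,
      iSup_le fun j => tsum_ofReal_normingWeight_le h _ A⟩
  refine ⟨m, fun j => normingWeight_nonneg h _, fun j => finite_support_normingWeight h _, hψ,
    fun A => ?_⟩
  rw [← Function.comp_def, summable_subtype_iff_indicator,
    summable_iff_tendsto_partialSumNormSup_Ici]
  simp only [partialSumNormSup_indicator, ← Set.compl_Iio, ← Set.sdiff_eq]
  exact ENNReal.tendsto_nhds_zero_iff_of_le_of_le_mul ENNReal.ofNat_ne_top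
    (fun N => (hψ _).1) (fun N => (hψ _).2)
end

section
/- Let J be an ideal on ℕ. Then there exist a real normed vector space X and a function h : ℕ → X such that for every A ⊆ ℕ: A ∈ J if and only if ∑_{n∈A} h(n) converges unconditionally in X. (Every ideal on ℕ is representable in a normed space.) -/
open Filter Topology

/-!
Take for `X` the bounded real sequences whose support lies in `J`, with the sup norm, and
`h n = 𝟙_{n} / (n + 1)`. For every `A` the family `(h n)_{n ∈ A}` has sum `𝟙_A / (n + 1)` in the
whole space of bounded sequences, since the weights tend to `0`; by uniqueness of limits it is
therefore summable in the subspace `X` exactly when this sum lies in `X`, i.e. when its support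
`A` belongs to `J`.
-/

open Function BoundedContinuousFunction

theorem summable_iff_mem_of_hasSum {ι E S : Type*} [AddCommMonoid E] [TopologicalSpace E]
    [T2Space E] [SetLike S E] [AddSubmonoidClass S E] (s : S) {f : ι → s} {a : E}
    (h : HasSum (fun i => (f i : E)) a) : Summable f ↔ a ∈ s := by
  have hind : IsInducing (AddSubmonoidClass.subtype s) := IsInducing.subtypeVal
  constructor
  · rintro ⟨b, hb⟩
    exact h.unique ((hind.hasSum_iff f b).2 hb) ▸ b.2
  · exact fun ha => ⟨⟨a, ha⟩, (hind.hasSum_iff f ⟨a, ha⟩).1 h⟩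

section SupportedIn

variable {α 𝕜 β : Type*} [TopologicalSpace α] [NormedField 𝕜] [SeminormedAddCommGroup β]
  [NormedSpace 𝕜 β]

variable (𝕜 β) in
def supportedIn (J : Set (Set α)) (hempty : ∅ ∈ J)
    (hdown : ∀ A B : Set α, A ⊆ B → B ∈ J → A ∈ J)
    (hunion : ∀ A B : Set α, A ∈ J → B ∈ J → A ∪ B ∈ J) : Submodule 𝕜 (α →ᵇ β) where
  carrier := {x | support x ∈ J}
  zero_mem' := by simpa using hempty
  add_mem' {x y} hx hy := hdown _ _ (support_add x y) (hunion _ _ hx hy)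
  smul_mem' c x hx := hdown _ _ (support_const_smul_subset c x) hx

theorem mem_supportedIn {J : Set (Set α)} {hempty : ∅ ∈ J}
    {hdown : ∀ A B : Set α, A ⊆ B → B ∈ J → A ∈ J}
    {hunion : ∀ A B : Set α, A ∈ J → B ∈ J → A ∪ B ∈ J} {x : α →ᵇ β} :
    x ∈ supportedIn 𝕜 β J hempty hdown hunion ↔ support x ∈ J := Iff.rfl

end SupportedIn

noncomputable def harmonicIndicator (A : Set ℕ) : ℕ →ᵇ ℝ :=
  ofNormedAddCommGroupDiscrete (A.indicator fun n => 1 / (n + 1 : ℝ)) 1 fun n =>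
    (norm_indicator_le_norm_self _ n).trans <| by
      rw [Real.norm_of_nonneg (by positivity)]
      exact div_le_one_of_le₀ (by simp) (by positivity)

theorem coe_harmonicIndicator (A : Set ℕ) :
    ⇑(harmonicIndicator A) = A.indicator fun n => 1 / (n + 1 : ℝ) := rfl

theorem support_harmonicIndicator (A : Set ℕ) : support (harmonicIndicator A) = A := by
  rw [coe_harmonicIndicator, Set.support_indicator, Set.inter_eq_left]
  exact fun n _ => one_div_ne_zero (Nat.cast_add_one_ne_zero n)

theorem sum_harmonicIndicator_singleton (s : Finset ℕ) :
    ∑ n ∈ s, harmonicIndicator {n} = harmonicIndicator s := by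
  ext m
  simp [coe_harmonicIndicator, Set.indicator_apply]

theorem harmonicIndicator_sub {A B : Set ℕ} (h : B ⊆ A) :
    harmonicIndicator A - harmonicIndicator B = harmonicIndicator (A \ B) := by
  ext m
  simp only [coe_sub, Pi.sub_apply, coe_harmonicIndicator, Set.indicator_sdiff h]

theorem norm_harmonicIndicator_le {A : Set ℕ} {N : ℕ} (h : ∀ n ∈ A, N ≤ n) :
    ‖harmonicIndicator A‖ ≤ 1 / (N + 1) := by
  refine (norm_le (by positivity)).2 fun n => ?_
  by_cases hn : n ∈ A
  · rw [coe_harmonicIndicator, Set.indicator_of_mem hn, Real.norm_of_nonneg (by positivity)]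
    gcongr
    exact h n hn
  · rw [coe_harmonicIndicator, Set.indicator_of_notMem hn, norm_zero]
    positivity

theorem hasSum_harmonicIndicator_singleton (A : Set ℕ) :
    HasSum (fun n : A => harmonicIndicator {(n : ℕ)}) (harmonicIndicator A) := by
  rw [HasSum, SummationFilter.unconditional_filter, Metric.tendsto_atTop]
  intro ε hε
  obtain ⟨N, hN⟩ := exists_nat_one_div_lt hε
  have hhead : {n : A | (n : ℕ) < N}.Finite :=
    (Set.finite_lt_nat N).preimage Subtype.val_injective.injOn
  refine ⟨hhead.toFinset, fun F hF => ?_⟩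
  set s := F.map (Embedding.subtype (· ∈ A))
  have hsA : (s : Set ℕ) ⊆ A := by simp [s]
  have htail : ∀ n ∈ A \ s, N ≤ n := fun n ⟨hnA, hns⟩ => not_lt.1 fun hn =>
    hns <| Finset.mem_map_of_mem _ <|
      hF (hhead.mem_toFinset.2 (show ((⟨n, hnA⟩ : A) : ℕ) < N from hn))
  have hsum : ∑ n ∈ F, harmonicIndicator {(n : ℕ)} = harmonicIndicator s := by
    rw [← sum_harmonicIndicator_singleton, Finset.sum_map]
    rfl
  calc dist (∑ n ∈ F, harmonicIndicator {(n : ℕ)}) (harmonicIndicator A)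
      = ‖harmonicIndicator (A \ s)‖ := by
        rw [hsum, dist_comm, dist_eq_norm, harmonicIndicator_sub hsA]
    _ ≤ 1 / (N + 1) := norm_harmonicIndicator_le htail
    _ < ε := hN

theorem stmt6_general (J : Set (Set ℕ))
    (hfin : ∀ A : Set ℕ, A.Finite → A ∈ J)
    (hdown : ∀ A B : Set ℕ, A ⊆ B → B ∈ J → A ∈ J)
    (hunion : ∀ A B : Set ℕ, A ∈ J → B ∈ J → A ∪ B ∈ J) :
    ∃ (X : Type) (_ : NormedAddCommGroup X) (_ : NormedSpace ℝ X) (h : ℕ → X),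
      ∀ A : Set ℕ, A ∈ J ↔ Summable (fun n : A => h n) := by
  set X := supportedIn ℝ ℝ J (hfin ∅ Set.finite_empty) hdown hunion
  have hmem (A : Set ℕ) : harmonicIndicator A ∈ X ↔ A ∈ J := by
    rw [mem_supportedIn, support_harmonicIndicator]
  have hX (n : ℕ) : harmonicIndicator {n} ∈ X := (hmem {n}).2 (hfin {n} (Set.finite_singleton n))
  refine ⟨X, inferInstance, inferInstance, fun n => ⟨harmonicIndicator {n}, hX n⟩, fun A => ?_⟩
  rw [summable_iff_mem_of_hasSum X (f := fun n : A => ⟨_, hX n⟩)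
    (hasSum_harmonicIndicator_singleton A), hmem]

/-- every ideal on ℕ is representable in a normed space. -/
theorem stmt6 (J : Set (Set ℕ))
    (hfin : ∀ A : Set ℕ, A.Finite → A ∈ J)
    (hdown : ∀ A B : Set ℕ, A ⊆ B → B ∈ J → A ∈ J)
    (hunion : ∀ A B : Set ℕ, A ∈ J → B ∈ J → A ∪ B ∈ J)
    (hproper : Set.univ ∉ J) :
    ∃ (X : Type) (_ : NormedAddCommGroup X) (_ : NormedSpace ℝ X) (h : ℕ → X),
      ∀ A : Set ℕ, A ∈ J ↔ Summable (fun n : A => h n) :=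
  stmt6_general J hfin hdown hunion
end

section
/- There exists a real normed vector space X whose dimension (Hamel dimension, i.e. Module.rank ℝ X) equals 2^𝔠, where 𝔠 = 2^ℵ₀ is the cardinality of the continuum, such that every ideal J on ℕ is representable in X: for every ideal J there is h : ℕ → X such that for every A ⊆ ℕ, A ∈ J if and only if ∑_{n∈A} h(n) converges unconditionally in X. -/
/-!
Work in `ℓ¹` over `Set (Set ℕ) × ℕ`, with one copy of `ℕ` for every family `J`, and represent
`J` by `h_J(n) = 2⁻ⁿ e_(J,n)`. Every subseries `∑_{n ∈ A} h_J(n)` converges absolutely, and `X`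
is spanned by these sums for `A ∈ J` or `A` finite (the latter put every `h_J(n)` into `X`, for
arbitrary families `J`). When `J` is an ideal, closure under finite unions shows that every
vector of `X` has its `J`-slot supported in a member of `J`, so the sum over `A` can only lie in
`X` when `A ∈ J`. The `2 ^ 𝔠` vectors `h_J(0)` are independent, and `X` is spanned by at most
`2 ^ 𝔠` vectors.
-/

open Filter

section EventuallyZero

variable {α : Type*} (R M : Type*) [Semiring R] [AddCommMonoid M] [Module R M]

def Filter.eventuallyZeroSubmodule (l : Filter α) : Submodule R (α → M) where
  carrier := {f | f =ᶠ[l] 0}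
  zero_mem' := EventuallyEq.rfl
  add_mem' {f g} hf hg := by simpa using hf.add hg
  smul_mem' c f hf := by simpa using hf.const_smul c

end EventuallyZero

theorem Submodule.hasSum_coe_iff {ι R M : Type*} [Semiring R] [AddCommMonoid M] [Module R M]
    [TopologicalSpace M] {p : Submodule R M} {f : ι → p} {a : p} :
    HasSum (fun i => (f i : M)) a ↔ HasSum f a :=
  Topology.IsInducing.subtypeVal.hasSum_iff (g := p.subtype) f a

noncomputable section

namespace IdealRepresentation

abbrev Slot : Type := Set (Set ℕ) × ℕ

abbrev W : Type := lp (fun _ : Slot => ℝ) 1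

def seq (J : Set (Set ℕ)) (n : ℕ) : W := lp.single 1 (J, n) ((2⁻¹ : ℝ) ^ n)

lemma summable_seq (J : Set (Set ℕ)) (A : Set ℕ) : Summable fun n : A => seq J n := by
  refine Summable.of_norm ?_
  have hnorm : ∀ n : A, ‖seq J n‖ = (2⁻¹ : ℝ) ^ (n : ℕ) := fun n => by
    simp [seq, lp.norm_single]
  simp only [hnorm]
  exact (summable_geometric_of_lt_one (by norm_num) (by norm_num)).comp_injective
    Subtype.val_injective

open scoped Classical in
lemma apply_eq_of_hasSum_seq {J : Set (Set ℕ)} {A : Set ℕ} {s : W}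
    (hs : HasSum (fun n : A => seq J n) s) (J' : Set (Set ℕ)) (m : ℕ) :
    s (J', m) = if J' = J ∧ m ∈ A then (2⁻¹ : ℝ) ^ m else 0 := by
  refine (hs.map (lp.evalCLM ℝ _ 1 (J', m)) (lp.evalCLM _ _ _ _).continuous).unique ?_
  split_ifs with h
  · obtain ⟨rfl, hm⟩ := h
    convert hasSum_single (⟨m, hm⟩ : A) _ using 1
    · simp [seq, lp.evalCLM]
    · intro n hn
      have hne : (J', m) ≠ (J', (n : ℕ)) := fun h => hn (Subtype.ext (Prod.mk.inj h).2.symm)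
      simp [seq, lp.evalCLM, lp.single_apply, Pi.single_eq_of_ne hne]
  · convert hasSum_zero with n
    have hne : (J', m) ≠ (J, (n : ℕ)) := fun h' => by
      obtain ⟨rfl, rfl⟩ := Prod.mk.inj h'
      exact h ⟨rfl, n.2⟩
    simp [seq, lp.evalCLM, lp.single_apply, Pi.single_eq_of_ne hne]

lemma support_slot_of_hasSum_seq {J : Set (Set ℕ)} {A : Set ℕ} {s : W}
    (hs : HasSum (fun n : A => seq J n) s) (J' : Set (Set ℕ)) :
    {m | s (J', m) ≠ 0} = {m | J' = J ∧ m ∈ A} := by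
  ext m
  simp [apply_eq_of_hasSum_seq hs]

def generators : Set W :=
  (fun p : Set (Set ℕ) × Set ℕ => ∑' n : p.2, seq p.1 n) '' {p | p.2 ∈ p.1 ∨ p.2.Finite}

def X : Submodule ℝ W := Submodule.span ℝ generators

lemma tsum_seq_mem_X {J : Set (Set ℕ)} {A : Set ℕ} (hA : A ∈ J ∨ A.Finite) :
    ∑' n : A, seq J n ∈ X :=
  Submodule.subset_span ⟨(J, A), hA, rfl⟩

lemma seq_mem_X (J : Set (Set ℕ)) (n : ℕ) : seq J n ∈ X := by
  simpa using tsum_seq_mem_X (J := J) (Or.inr (Set.finite_singleton n))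

lemma slot_support_mem_of_mem_X {J : Set (Set ℕ)} (hfin : ∀ A : Set ℕ, A.Finite → A ∈ J)
    (hdown : ∀ A B : Set ℕ, A ⊆ B → B ∈ J → A ∈ J)
    (hun : ∀ A B : Set ℕ, A ∈ J → B ∈ J → A ∪ B ∈ J) {w : W} (hw : w ∈ X) :
    {m | w (J, m) ≠ 0} ∈ J := by
  let F : Filter ℕ := comk (· ∈ J) (hfin ∅ Set.finite_empty)
    (fun B hB A hAB => hdown A B hAB hB) (fun A hA B hB => hun A B hA hB)
  let slot : W →ₗ[ℝ] ℕ → ℝ := LinearMap.pi fun m => lp.evalₗ _ _ (J, m)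
  have mem_iff (v : W) : v ∈ (Filter.eventuallyZeroSubmodule ℝ ℝ F).comap slot ↔
      {m | v (J, m) ≠ 0} ∈ J := by
    simp [F, slot, Filter.eventuallyZeroSubmodule, EventuallyEq, eventually_iff,
      Set.compl_ofPred]
  suffices X ≤ (Filter.eventuallyZeroSubmodule ℝ ℝ F).comap slot from (mem_iff w).1 (this hw)
  refine Submodule.span_le.2 ?_
  rintro _ ⟨⟨J', B⟩, hB, rfl⟩
  rw [SetLike.mem_coe, mem_iff, support_slot_of_hasSum_seq (summable_seq J' B).hasSum J]
  by_cases hJ : J = J'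
  · subst hJ
    simpa using hB.elim id (hfin B)
  · simpa [hJ] using hfin ∅ Set.finite_empty

lemma mem_of_hasSum_seq_mem_X {J : Set (Set ℕ)} (hfin : ∀ A : Set ℕ, A.Finite → A ∈ J)
    (hdown : ∀ A B : Set ℕ, A ⊆ B → B ∈ J → A ∈ J)
    (hun : ∀ A B : Set ℕ, A ∈ J → B ∈ J → A ∪ B ∈ J) {A : Set ℕ} {s : W}
    (hs : HasSum (fun n : A => seq J n) s) (hsX : s ∈ X) : A ∈ J := by
  simpa [support_slot_of_hasSum_seq hs J] using slot_support_mem_of_mem_X hfin hdown hun hsX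

lemma mk_set_set_nat : Cardinal.mk (Set (Set ℕ)) = 2 ^ Cardinal.continuum := by
  rw [Cardinal.mk_set, Cardinal.mk_set, Cardinal.mk_nat, Cardinal.two_power_aleph0]

lemma rank_X_le : Module.rank ℝ X ≤ 2 ^ Cardinal.continuum :=
  calc Module.rank ℝ X ≤ Cardinal.mk generators := rank_span_le generators
    _ ≤ Cardinal.mk (Set (Set ℕ) × Set ℕ) := Cardinal.mk_image_le.trans (Cardinal.mk_set_le _)
    _ = 2 ^ Cardinal.continuum * Cardinal.continuum := by
      rw [Cardinal.mk_prod, Cardinal.lift_id, Cardinal.lift_id, mk_set_set_nat, Cardinal.mk_set,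
        Cardinal.mk_nat, Cardinal.two_power_aleph0]
    _ = 2 ^ Cardinal.continuum :=
      Cardinal.mul_eq_left (Cardinal.aleph0_le_continuum.trans (Cardinal.cantor _).le)
        (Cardinal.cantor _).le Cardinal.continuum_ne_zero

lemma linearIndependent_seq_zero : LinearIndependent ℝ fun J : Set (Set ℕ) => seq J 0 := by
  classical
  let slotZero : W →ₗ[ℝ] Set (Set ℕ) → ℝ := LinearMap.pi fun J => lp.evalₗ _ _ (J, 0)
  refine LinearIndependent.of_comp slotZero ?_
  convert Pi.linearIndependent_single_one (Set (Set ℕ)) ℝ with J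
  ext K
  simp [slotZero, seq, Pi.single_apply]

lemma le_rank_X : 2 ^ Cardinal.continuum ≤ Module.rank ℝ X := by
  have hli : LinearIndependent ℝ fun J : Set (Set ℕ) => (⟨seq J 0, seq_mem_X J 0⟩ : X) :=
    LinearIndependent.of_comp X.subtype linearIndependent_seq_zero
  simpa [mk_set_set_nat] using hli.cardinal_le_rank

end IdealRepresentation

end

open IdealRepresentation in
/-- there is a normed space of Hamel dimension `2 ^ 𝔠` in which every ideal on
ℕ is representable. -/
theorem stmt7 :
    ∃ (X : Type) (_ : NormedAddCommGroup X) (_ : NormedSpace ℝ X),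
      Module.rank ℝ X = 2 ^ Cardinal.continuum ∧
      ∀ J : Set (Set ℕ),
        (∀ A : Set ℕ, A.Finite → A ∈ J) →
        (∀ A B : Set ℕ, A ⊆ B → B ∈ J → A ∈ J) →
        (∀ A B : Set ℕ, A ∈ J → B ∈ J → A ∪ B ∈ J) →
        Set.univ ∉ J →
        ∃ h : ℕ → X, ∀ A : Set ℕ, A ∈ J ↔ Summable (fun n : A => h n) := by
  refine ⟨↥X, inferInstance, inferInstance, ?_, ?_⟩
  · exact le_antisymm rank_X_le le_rank_X
  intro J hfin hdown hun _
  refine ⟨fun n => ⟨seq J n, seq_mem_X J n⟩, fun A => ⟨fun hA => ?_, ?_⟩⟩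
  · exact ⟨⟨_, tsum_seq_mem_X (Or.inl hA)⟩, Submodule.hasSum_coe_iff.1 (summable_seq J A).hasSum⟩
  · rintro ⟨t, ht⟩
    have hsum := Submodule.hasSum_coe_iff.2 ht
    exact mem_of_hasSum_seq_mem_X hfin hdown hun hsum t.2
end

section
/- The trace of the null ideal is summable-like; precisely, for the lsc submeasure φ_N on List Bool defined below, there exists ε > 0 such that for every δ > 0 there exist a sequence (A_n)_{n∈ℕ} of pairwise disjoint finite subsets of List Bool with φ_N(A_n) < δ for every n, and a k ∈ ℕ such that for every Y ⊆ ℕ with |Y| = k one has φ_N(⋃_{n∈Y} A_n) ≥ ε. -/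
/-!
Cut binary words into blocks of length `L` and let `A_n` be the words of length `L (n + 1)`
whose last block is zero. These are `2^(L n)` words of weight `2^(-L (n + 1))`, so
`φ_N (A_n) ≤ 2^(-L)`.
Given `Y` of size `k`, the words of `⋃_{n ∈ Y} A_n` whose only zero block at a position in `Y`
is the last one form an antichain, and for each `n ∈ Y` they miss at most a fraction `k 2^(-L)`
of `A_n`. Hence `φ_N (⋃_{n ∈ Y} A_n) ≥ k 2^(-L) - k² 2^(-2L)`, which is `1/4` for `k = 2^N`,
`L = N + 1`, while `2^(-L) → 0` as `N → ∞`.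
-/

namespace NullIdealTrace

/-- The submeasure `φ_N`. -/
noncomputable def nullSubmeasure (A : Set (List Bool)) : ENNReal :=
  ⨆ (B : Finset (List Bool)) (_ : ↑B ⊆ A ∧ IsAntichain (· <+: ·) (B : Set (List Bool))),
    ∑ s ∈ B, (2 : ENNReal) ^ (-(s.length : ℤ))

lemma sum_le_nullSubmeasure {A : Set (List Bool)} {B : Finset (List Bool)} (hBA : ↑B ⊆ A)
    (hB : IsAntichain (· <+: ·) (B : Set (List Bool))) :
    ∑ s ∈ B, (2 : ENNReal) ^ (-(s.length : ℤ)) ≤ nullSubmeasure A := by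
  unfold nullSubmeasure
  exact le_iSup₂_of_le B ⟨hBA, hB⟩ le_rfl

lemma nullSubmeasure_le_sum (S : Finset (List Bool)) :
    nullSubmeasure S ≤ ∑ s ∈ S, (2 : ENNReal) ^ (-(s.length : ℤ)) :=
  iSup₂_le fun _ hB => Finset.sum_le_sum_of_subset (by exact_mod_cast hB.1)

lemma sum_two_zpow_neg_length_of_length_eq {S : Finset (List Bool)} {m : ℕ}
    (h : ∀ s ∈ S, s.length = m) :
    ∑ s ∈ S, (2 : ENNReal) ^ (-(s.length : ℤ)) = S.card * 2⁻¹ ^ m := by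
  rw [Finset.sum_congr rfl fun s hs => by rw [h s hs], Finset.sum_const, nsmul_eq_mul,
    ENNReal.zpow_neg, zpow_natCast, ENNReal.inv_pow]

lemma two_pow_mul_inv_two_pow (m : ℕ) : (2 : ENNReal) ^ m * 2⁻¹ ^ m = 1 := by
  rw [← mul_pow, ENNReal.mul_inv_cancel two_ne_zero ENNReal.ofNat_ne_top, one_pow]

def words (m : ℕ) : Finset (List Bool) :=
  (Finset.univ : Finset (List.Vector Bool m)).map
    ⟨List.Vector.toList, List.Vector.toList_injective⟩

lemma mem_words {m : ℕ} {s : List Bool} : s ∈ words m ↔ s.length = m := by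
  simp only [words, Finset.mem_map, Finset.mem_univ, true_and, Function.Embedding.coeFn_mk]
  exact ⟨fun ⟨v, hv⟩ => hv ▸ v.toList_length, fun h => ⟨⟨s, h⟩, rfl⟩⟩

lemma card_words (m : ℕ) : (words m).card = 2 ^ m := by
  simp [words, card_vector]

/-- Block `p` of `l`, i.e. positions `L p, …, L p + L - 1`, is all zeros. -/
def HasZeroBlockAt (L p : ℕ) (l : List Bool) : Prop :=
  List.replicate L false <+: l.drop (L * p)

instance (L p : ℕ) : DecidablePred (HasZeroBlockAt L p) :=
  fun _ => inferInstanceAs (Decidable (_ <+: _))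

lemma hasZeroBlockAt_of_prefix {L p : ℕ} {a l : List Bool} (ha : a.length = L * p)
    (h : a ++ List.replicate L false <+: l) : HasZeroBlockAt L p l := by
  obtain ⟨r, rfl⟩ := h
  simp [HasZeroBlockAt, ← ha, List.drop_left']

lemma two_pow_mul_card_filter_hasZeroBlockAt_le {L p M : ℕ} (h : L * p + L ≤ M) :
    2 ^ L * ((words M).filter (HasZeroBlockAt L p)).card ≤ 2 ^ M := by
  have hsub : (words M).filter (HasZeroBlockAt L p) ⊆
      (words (L * p) ×ˢ words (M - (L * p + L))).image
        (fun ab => ab.1 ++ List.replicate L false ++ ab.2) := by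
    intro l hl
    rw [Finset.mem_filter, mem_words] at hl
    obtain ⟨hlen, b, hb⟩ := hl
    have hl : l = l.take (L * p) ++ List.replicate L false ++ b := by
      rw [List.append_assoc, hb, List.take_append_drop]
    refine Finset.mem_image.mpr ⟨(l.take (L * p), b), ?_, hl.symm⟩
    have := congrArg List.length hl
    simp only [List.length_append, List.length_take, List.length_replicate] at this
    simp only [Finset.mem_product, mem_words, List.length_take]
    omega
  calc 2 ^ L * _ ≤ 2 ^ L * (2 ^ (L * p) * 2 ^ (M - (L * p + L))) := by
        gcongr
        calc _ ≤ _ := Finset.card_le_card hsub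
          _ ≤ _ := Finset.card_image_le
          _ = _ := by rw [Finset.card_product, card_words, card_words]
    _ = 2 ^ M := by rw [← pow_add, ← pow_add]; congr 1; omega

/-- `A_n`: the words of length `L (n + 1)` ending in a zero block. -/
def zeroEnded (L n : ℕ) : Finset (List Bool) :=
  (words (L * n)).image (· ++ List.replicate L false)

lemma length_of_mem_zeroEnded {L n : ℕ} {s : List Bool} (h : s ∈ zeroEnded L n) :
    s.length = L * (n + 1) := by
  obtain ⟨l, hl, rfl⟩ := Finset.mem_image.mp h
  simp [mem_words.mp hl, Nat.mul_succ]

lemma disjoint_zeroEnded {L n m : ℕ} (hL : 0 < L) (hnm : n ≠ m) :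
    Disjoint (zeroEnded L n) (zeroEnded L m) :=
  Finset.disjoint_left.mpr fun _ hn hm => hnm <| by
    have := (length_of_mem_zeroEnded hn).symm.trans (length_of_mem_zeroEnded hm)
    simpa using Nat.eq_of_mul_eq_mul_left hL this

lemma nullSubmeasure_zeroEnded_le (L n : ℕ) : nullSubmeasure (zeroEnded L n) ≤ 2⁻¹ ^ L :=
  calc nullSubmeasure (zeroEnded L n)
      ≤ (zeroEnded L n).card * 2⁻¹ ^ (L * (n + 1)) := by
        rw [← sum_two_zpow_neg_length_of_length_eq fun _ => length_of_mem_zeroEnded]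
        exact nullSubmeasure_le_sum _
    _ ≤ (2 : ENNReal) ^ (L * n) * (2⁻¹ ^ (L * n) * 2⁻¹ ^ L) := by
        rw [mul_add_one, pow_add]
        gcongr
        exact_mod_cast Finset.card_image_le.trans (card_words _).le
    _ = 2⁻¹ ^ L := by rw [← mul_assoc, two_pow_mul_inv_two_pow, one_mul]

def firstZeroBlockIn (L : ℕ) (Y : Finset ℕ) (n : ℕ) : Finset (List Bool) :=
  ((words (L * n)).filter fun l => ∀ m ∈ Y, m < n → ¬ HasZeroBlockAt L m l).image
    (· ++ List.replicate L false)

lemma firstZeroBlockIn_subset (L : ℕ) (Y : Finset ℕ) (n : ℕ) :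
    firstZeroBlockIn L Y n ⊆ zeroEnded L n :=
  Finset.image_subset_image (Finset.filter_subset _ _)

lemma two_pow_mul_two_pow_le_card_firstZeroBlockIn (L : ℕ) (Y : Finset ℕ) (n : ℕ) :
    2 ^ L * 2 ^ (L * n) ≤ 2 ^ L * (firstZeroBlockIn L Y n).card + Y.card * 2 ^ (L * n) := by
  set good := fun l : List Bool => ∀ m ∈ Y, m < n → ¬ HasZeroBlockAt L m l
  have hbad : (words (L * n)).filter (fun l => ¬ good l) ⊆
      (Y.filter (· < n)).biUnion fun m => (words (L * n)).filter (HasZeroBlockAt L m) := by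
    intro l hl
    simp only [good, Finset.mem_filter, not_forall, not_not] at hl
    obtain ⟨hl, m, hm, hmn, hz⟩ := hl
    exact Finset.mem_biUnion.mpr
      ⟨m, Finset.mem_filter.mpr ⟨hm, hmn⟩, Finset.mem_filter.mpr ⟨hl, hz⟩⟩
  have hbad_card : 2 ^ L * ((words (L * n)).filter (fun l => ¬ good l)).card
      ≤ Y.card * 2 ^ (L * n) :=
    calc _ ≤ 2 ^ L * ∑ m ∈ Y.filter (· < n),
            ((words (L * n)).filter (HasZeroBlockAt L m)).card := by
          gcongr
          exact (Finset.card_le_card hbad).trans Finset.card_biUnion_le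
      _ ≤ ∑ m ∈ Y.filter (· < n), 2 ^ (L * n) := by
          rw [Finset.mul_sum]
          refine Finset.sum_le_sum fun m hm => two_pow_mul_card_filter_hasZeroBlockAt_le ?_
          rw [← Nat.mul_succ]
          exact Nat.mul_le_mul_left L (Finset.mem_filter.mp hm).2
      _ ≤ Y.card * 2 ^ (L * n) := by
          rw [Finset.sum_const, smul_eq_mul]
          gcongr
          exact Finset.filter_subset _ _
  have hcard : (firstZeroBlockIn L Y n).card = ((words (L * n)).filter good).card :=
    Finset.card_image_of_injective _ (List.append_left_injective _)
  calc 2 ^ L * 2 ^ (L * n)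
      = 2 ^ L * ((words (L * n)).filter good).card
        + 2 ^ L * ((words (L * n)).filter (fun l => ¬ good l)).card := by
        rw [← mul_add, Finset.card_filter_add_card_filter_not, card_words]
    _ ≤ _ := by rw [hcard]; gcongr

lemma isAntichain_biUnion_firstZeroBlockIn (L : ℕ) (Y : Finset ℕ) :
    IsAntichain (· <+: ·) (Y.biUnion (firstZeroBlockIn L Y) : Set (List Bool)) := by
  intro s hs t ht hne hst
  simp only [Finset.coe_biUnion, Set.mem_iUnion, Finset.mem_coe, firstZeroBlockIn,
    Finset.mem_image, Finset.mem_filter, mem_words] at hs ht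
  obtain ⟨i, hi, l, ⟨hl, -⟩, rfl⟩ := hs
  obtain ⟨j, -, l', ⟨hl', hgood⟩, rfl⟩ := ht
  have hlen := lt_of_le_of_ne hst.length_le fun h => hne (hst.eq_of_length h)
  simp only [List.length_append, List.length_replicate, hl, hl', add_lt_add_iff_right] at hlen
  have hij : i < j := Nat.lt_of_mul_lt_mul_left hlen
  refine hgood i hi hij (hasZeroBlockAt_of_prefix hl ?_)
  refine List.prefix_of_prefix_length_le hst (List.prefix_append _ _) ?_
  simpa [hl, hl', ← Nat.mul_succ] using Nat.mul_le_mul_left L hij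

lemma inv_two_pow_le_sum_firstZeroBlockIn_add (L : ℕ) (Y : Finset ℕ) (n : ℕ) :
    (2⁻¹ : ENNReal) ^ L ≤ ∑ s ∈ firstZeroBlockIn L Y n, (2 : ENNReal) ^ (-(s.length : ℤ))
      + Y.card * (2⁻¹ ^ L * 2⁻¹ ^ L) := by
  rw [sum_two_zpow_neg_length_of_length_eq fun s hs =>
    length_of_mem_zeroEnded (firstZeroBlockIn_subset L Y n hs)]
  have hcount : (2 : ENNReal) ^ L * 2 ^ (L * n)
      ≤ 2 ^ L * (firstZeroBlockIn L Y n).card + Y.card * 2 ^ (L * n) := by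
    exact_mod_cast two_pow_mul_two_pow_le_card_firstZeroBlockIn L Y n
  set x : ENNReal := 2⁻¹ ^ L
  set y : ENNReal := 2⁻¹ ^ (L * n)
  have hx : (2 : ENNReal) ^ L * x = 1 := two_pow_mul_inv_two_pow L
  have hy : (2 : ENNReal) ^ (L * n) * y = 1 := two_pow_mul_inv_two_pow (L * n)
  calc x = (2 ^ L * x) * (2 ^ (L * n) * y) * x := by rw [hx, hy, one_mul, one_mul]
    _ = 2 ^ L * 2 ^ (L * n) * (y * x * x) := by ring
    _ ≤ (2 ^ L * (firstZeroBlockIn L Y n).card + Y.card * 2 ^ (L * n)) * (y * x * x) := by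
        gcongr
    _ = (firstZeroBlockIn L Y n).card * (y * x) * (2 ^ L * x)
          + Y.card * (x * x) * (2 ^ (L * n) * y) := by ring
    _ = _ := by rw [hx, hy, mul_one, mul_one, mul_add_one, pow_add]

lemma card_mul_le_nullSubmeasure_iUnion_zeroEnded_add {L : ℕ} (hL : 0 < L) (Y : Finset ℕ) :
    Y.card * (2⁻¹ : ENNReal) ^ L ≤ nullSubmeasure (⋃ n ∈ Y, (zeroEnded L n : Set (List Bool)))
      + (Y.card * 2⁻¹ ^ L) ^ 2 := by
  have hsub : (↑(Y.biUnion (firstZeroBlockIn L Y)) : Set (List Bool))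
      ⊆ ⋃ n ∈ Y, (zeroEnded L n : Set (List Bool)) := by
    rw [Finset.coe_biUnion]
    exact Set.biUnion_mono subset_rfl fun n _ => by
      exact_mod_cast firstZeroBlockIn_subset L Y n
  have hdisj : (Y : Set ℕ).PairwiseDisjoint (firstZeroBlockIn L Y) := fun n _ m _ hnm =>
    (disjoint_zeroEnded hL hnm).mono (firstZeroBlockIn_subset L Y n)
      (firstZeroBlockIn_subset L Y m)
  calc Y.card * (2⁻¹ : ENNReal) ^ L = ∑ _n ∈ Y, (2⁻¹ : ENNReal) ^ L := by
        rw [Finset.sum_const, nsmul_eq_mul]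
    _ ≤ ∑ n ∈ Y, (∑ s ∈ firstZeroBlockIn L Y n, (2 : ENNReal) ^ (-(s.length : ℤ))
          + Y.card * (2⁻¹ ^ L * 2⁻¹ ^ L)) :=
        Finset.sum_le_sum fun n _ => inv_two_pow_le_sum_firstZeroBlockIn_add L Y n
    _ = ∑ s ∈ Y.biUnion (firstZeroBlockIn L Y), (2 : ENNReal) ^ (-(s.length : ℤ))
          + (Y.card * 2⁻¹ ^ L) ^ 2 := by
        rw [Finset.sum_add_distrib, Finset.sum_biUnion hdisj, Finset.sum_const, nsmul_eq_mul]
        ring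
    _ ≤ _ := by
        gcongr
        exact sum_le_nullSubmeasure hsub (isAntichain_biUnion_firstZeroBlockIn L Y)

end NullIdealTrace

open NullIdealTrace in
/-- the submeasure `φ_N` defining the trace of the null ideal (on `2^{<ω}`,
identified with `List Bool`) is summable-like. -/
theorem stmt8 (φ : Set (List Bool) → ENNReal)
    (hφ : ∀ A : Set (List Bool),
      φ A = ⨆ (B : Finset (List Bool))
        (_ : ↑B ⊆ A ∧ ∀ s ∈ B, ∀ t ∈ B, s ≠ t → ¬ s <+: t),
        ∑ s ∈ B, (2 : ENNReal) ^ (-(s.length : ℤ))) :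
    ∃ ε : ENNReal, 0 < ε ∧
      ∀ δ : ENNReal, 0 < δ →
        ∃ A : ℕ → Finset (List Bool),
          (∀ n m : ℕ, n ≠ m → Disjoint (A n) (A m)) ∧
          (∀ n : ℕ, φ ↑(A n) < δ) ∧
          ∃ k : ℕ, ∀ Y : Finset ℕ, Y.card = k → ε ≤ φ (⋃ n ∈ Y, ↑(A n)) := by
  obtain rfl : φ = nullSubmeasure := funext hφ
  refine ⟨2⁻¹ ^ 2, ENNReal.pow_pos (ENNReal.inv_pos.mpr ENNReal.ofNat_ne_top) 2,
    fun δ hδ => ?_⟩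
  obtain ⟨N, hN⟩ := ENNReal.exists_inv_two_pow_lt hδ.ne'
  refine ⟨zeroEnded (N + 1), fun n m => disjoint_zeroEnded N.succ_pos, fun n => ?_,
    2 ^ N, fun Y hY => ?_⟩
  · calc nullSubmeasure (zeroEnded (N + 1) n)
        ≤ 2⁻¹ ^ (N + 1) := nullSubmeasure_zeroEnded_le _ _
      _ ≤ 2⁻¹ ^ N := pow_le_pow_right_of_le_one' (by norm_num) N.le_succ
      _ < δ := hN
  · have hbound := card_mul_le_nullSubmeasure_iUnion_zeroEnded_add N.succ_pos Y
    have hhalf : ((2 ^ N : ℕ) : ENNReal) * 2⁻¹ ^ (N + 1) = 2⁻¹ := by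
      rw [Nat.cast_pow, Nat.cast_ofNat, pow_succ, ← mul_assoc, two_pow_mul_inv_two_pow, one_mul]
    have hquarter : (2⁻¹ : ENNReal) ^ 2 + 2⁻¹ ^ 2 = 2⁻¹ := by
      rw [← two_mul, sq, ← mul_assoc, ENNReal.mul_inv_cancel two_ne_zero ENNReal.ofNat_ne_top,
        one_mul]
    rw [hY, hhalf] at hbound
    exact ENNReal.le_of_add_le_add_right (by simp) (hquarter.trans_le hbound)
end

section
/- Let J be an ideal on ℕ. Then J is representable in c₀, i.e. there exists h : ℕ → c₀ such that for every A ⊆ ℕ, A ∈ J iff ∑_{n∈A} h(n) converges unconditionally in c₀, if and only if there exists a family m : ℕ → ℕ → [0,∞) of mass functions such that {k ∈ ℕ : m(k)(n) ≠ 0} is finite for every n ∈ ℕ and, with φ(A) = sup_{k∈ℕ} ∑_{n∈A} m(k)(n), for every A ⊆ ℕ: A ∈ J iff φ(A \ [0,N)) → 0 as N → ∞. -/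
/-!
For real numbers, `∑ i ∈ t, |a i|` is at most twice the largest `|∑ i ∈ u, a i|` over `u ⊆ t`
(split `t` by the sign of `a`). Hence a series `∑ h(n)` in `c₀` converges unconditionally iff its
tails are uniformly absolutely small in every coordinate:
`sup_k ∑_{n ∈ A, n ≥ N} |h(n)(k)| → 0`. So if every `h(n)` is finitely supported,
`m(k)(n) = |h(n)(k)|` represents the same ideal. A general `h` can be replaced by finitely supported
`g(n)` with `‖h(n) - g(n)‖ ≤ 2⁻ⁿ`, which changes no subseries' convergence. Conversely, a family `m`
as in the statement gives finitely supported vectors `h(n) = (m(k)(n))ₖ ∈ c₀`.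
-/

open Filter Topology
open scoped ZeroAtInfty ENNReal

lemma Finset.sum_abs_le_two_mul_of_forall_subset {ι : Type*} (t : Finset ι) (a : ι → ℝ) {δ : ℝ}
    (h : ∀ u ⊆ t, |∑ i ∈ u, a i| ≤ δ) : ∑ i ∈ t, |a i| ≤ 2 * δ := by
  classical
  have hpos : ∑ i ∈ t with 0 ≤ a i, |a i| ≤ δ := by
    rw [sum_congr rfl fun i hi => abs_of_nonneg (mem_filter.mp hi).2]
    exact (le_abs_self _).trans (h _ (filter_subset _ _))
  have hneg : ∑ i ∈ t with ¬0 ≤ a i, |a i| ≤ δ := by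
    rw [sum_congr rfl fun i hi => abs_of_neg (not_le.mp (mem_filter.mp hi).2), sum_neg_distrib]
    exact (neg_le_abs _).trans (h _ (filter_subset _ _))
  rw [← sum_filter_add_sum_filter_not t (fun i => 0 ≤ a i)]
  linarith

lemma ENNReal.tsum_subtype_le_iff {α : Type*} (f : α → ℝ≥0∞) (s : Set α) (c : ℝ≥0∞) :
    ∑' a : s, f a ≤ c ↔ ∀ t : Finset α, ↑t ⊆ s → ∑ a ∈ t, f a ≤ c := by
  classical
  rw [tsum_subtype, ENNReal.tsum_eq_iSup_sum, iSup_le_iff]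
  refine ⟨fun h t ht => ?_, fun h t => ?_⟩
  · rw [← Finset.sum_congr rfl fun n hn => Set.indicator_of_mem (ht hn) f]
    exact h t
  · rw [Finset.sum_indicator_eq_sum_filter]
    exact h _ fun n hn => (Finset.mem_filter.mp hn).2

section SupMass

variable {X : Type*}

/-- The paper's `φ(B) = sup_k ∑_{n ∈ B} m(k)(n)`, valued in `ℝ≥0∞` so that a
divergent sum is `⊤` rather than a junk value. -/
noncomputable def supMass (m : X → ℕ → ℝ) (B : Set ℕ) : ℝ≥0∞ :=
  ⨆ x, ∑' n : B, ENNReal.ofReal (m x n)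

lemma supMass_mono (m : X → ℕ → ℝ) : Monotone (supMass m) :=
  fun _ _ hB => iSup_mono fun x => ENNReal.tsum_mono_subtype (fun n => ENNReal.ofReal (m x n)) hB

lemma supMass_le_ofReal_iff {m : X → ℕ → ℝ} (hm : ∀ x n, 0 ≤ m x n) (B : Set ℕ) {ε : ℝ}
    (hε : 0 ≤ ε) :
    supMass m B ≤ ENNReal.ofReal ε ↔ ∀ x (t : Finset ℕ), ↑t ⊆ B → ∑ n ∈ t, m x n ≤ ε := by
  refine iSup_le_iff.trans <| forall_congr' fun x =>
    (ENNReal.tsum_subtype_le_iff (fun n => ENNReal.ofReal (m x n)) B _).trans <|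
      forall₂_congr fun t _ => ?_
  rw [← ENNReal.ofReal_sum_of_nonneg fun n _ => hm x n, ENNReal.ofReal_le_ofReal_iff hε]

lemma tendsto_supMass_diff_Iio_iff {m : X → ℕ → ℝ} (hm : ∀ x n, 0 ≤ m x n) (A : Set ℕ) :
    Tendsto (fun N => supMass m (A \ Set.Iio N)) atTop (𝓝 0) ↔
      ∀ ε > 0, ∃ N, ∀ x (t : Finset ℕ), ↑t ⊆ A \ Set.Iio N → ∑ n ∈ t, m x n ≤ ε := by
  rw [ENNReal.tendsto_atTop_zero]
  constructor
  · intro h ε hε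
    obtain ⟨N, hN⟩ := h (ENNReal.ofReal ε) (ENNReal.ofReal_pos.mpr hε)
    exact ⟨N, (supMass_le_ofReal_iff hm _ hε.le).mp (hN N le_rfl)⟩
  · intro h ε hε
    obtain ⟨r, -, hr, hrε⟩ := ENNReal.lt_iff_exists_real_btwn.mp hε
    obtain ⟨N, hN⟩ := h r (ENNReal.ofReal_pos.mp hr)
    refine ⟨N, fun M hM => ?_⟩
    calc supMass m (A \ Set.Iio M)
        ≤ supMass m (A \ Set.Iio N) :=
          supMass_mono m (Set.sdiff_subset_sdiff_right (Set.Iio_subset_Iio hM))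
      _ ≤ ENNReal.ofReal r := (supMass_le_ofReal_iff hm _ (ENNReal.ofReal_pos.mp hr).le).mpr hN
      _ ≤ ε := hrε.le

end SupMass

namespace ZeroAtInftyContinuousMap

variable {X : Type*} [TopologicalSpace X]

lemma finsetSum_apply {ι β : Type*} [AddCommMonoid β] [TopologicalSpace β] [ContinuousAdd β]
    (s : Finset ι) (f : ι → C₀(X, β)) (x : X) : (∑ i ∈ s, f i) x = ∑ i ∈ s, f i x :=
  map_sum (⟨⟨fun f : C₀(X, β) => f x, rfl⟩, fun _ _ => rfl⟩ : C₀(X, β) →+ β) f s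

lemma norm_apply_le {β : Type*} [SeminormedAddCommGroup β] (f : C₀(X, β)) (x : X) :
    ‖f x‖ ≤ ‖f‖ :=
  f.toBCF.norm_coe_le_norm x

lemma norm_le_of_forall_le {β : Type*} [SeminormedAddCommGroup β] {f : C₀(X, β)} {C : ℝ}
    (hC : 0 ≤ C) (h : ∀ x, ‖f x‖ ≤ C) : ‖f‖ ≤ C :=
  (BoundedContinuousFunction.norm_le hC).mpr h

theorem summable_iff_vanishing_sum_abs {ι : Type*} (f : ι → C₀(X, ℝ)) :
    Summable f ↔ ∀ ε > 0, ∃ s : Finset ι, ∀ t : Finset ι, Disjoint t s →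
      ∀ x, ∑ i ∈ t, |f i x| ≤ ε := by
  rw [summable_iff_vanishing_norm]
  constructor
  · intro hf ε hε
    obtain ⟨s, hs⟩ := hf (ε / 2) (by positivity)
    refine ⟨s, fun t ht x => ?_⟩
    have := Finset.sum_abs_le_two_mul_of_forall_subset t (fun i => f i x) fun u hu => by
      rw [← finsetSum_apply, ← Real.norm_eq_abs]
      exact (norm_apply_le _ x).trans (hs u (ht.mono_left hu)).le
    linarith
  · intro hf ε hε
    obtain ⟨s, hs⟩ := hf (ε / 2) (by positivity)
    refine ⟨s, fun t ht => (norm_le_of_forall_le (by positivity) fun x => ?_).trans_lt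
      (half_lt_self hε)⟩
    rw [finsetSum_apply, Real.norm_eq_abs]
    exact (Finset.abs_sum_le_sum_abs _ _).trans (hs t ht x)

section Discrete

variable [DiscreteTopology X]

noncomputable def ofFiniteSupport (f : X → ℝ) (hf : f.support.Finite) : C₀(X, ℝ) :=
  ⟨⟨f, continuous_of_discreteTopology⟩, by
    rw [cocompact_eq_cofinite]
    exact tendsto_nhds_of_eventually_eq (eventually_cofinite.mpr hf)⟩

@[simp] lemma ofFiniteSupport_apply (f : X → ℝ) (hf : f.support.Finite) (x : X) :
    ofFiniteSupport f hf x = f x :=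
  rfl

lemma exists_finite_support_norm_sub_le (f : C₀(X, ℝ)) {ε : ℝ} (hε : 0 < ε) :
    ∃ g : C₀(X, ℝ), (⇑g).support.Finite ∧ ‖f - g‖ ≤ ε := by
  set S := {x | f x ∉ Metric.closedBall (0 : ℝ) ε}
  have hS : S.Finite := by
    have hf : Tendsto f cofinite (𝓝 0) := cocompact_eq_cofinite X ▸ zero_at_infty f
    exact eventually_cofinite.mp (hf.eventually (Metric.closedBall_mem_nhds 0 hε))
  refine ⟨ofFiniteSupport (S.indicator f) (hS.subset (Set.support_indicator_subset)),
    hS.subset Set.support_indicator_subset, norm_le_of_forall_le hε.le fun x => ?_⟩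
  by_cases hx : x ∈ S
  · simp [hx, hε.le]
  · have hfx : f x ∈ Metric.closedBall (0 : ℝ) ε := not_not.mp hx
    simpa [hx] using hfx

end Discrete

theorem summable_subtype_iff_vanishing_tail (g : ℕ → C₀(X, ℝ)) (A : Set ℕ) :
    Summable (fun n : A => g n) ↔
      ∀ ε > 0, ∃ N, ∀ x (t : Finset ℕ), ↑t ⊆ A \ Set.Iio N → ∑ n ∈ t, |g n x| ≤ ε := by
  classical
  rw [summable_iff_vanishing_sum_abs]
  refine forall₂_congr fun ε _ => ⟨fun ⟨s, hs⟩ => ?_, fun ⟨N, hN⟩ => ?_⟩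
  · refine ⟨s.sup (↑) + 1, fun x t ht => ?_⟩
    have hdisj : Disjoint (t.subtype (· ∈ A)) s := Finset.disjoint_left.mpr fun n hnt hns => by
      have hn : (n : ℕ) ∉ Set.Iio (s.sup (↑) + 1) := (ht (Finset.mem_subtype.mp hnt)).2
      exact hn (Nat.lt_succ_of_le (Finset.le_sup (f := ((↑) : A → ℕ)) hns))
    simpa only [Finset.sum_subtype_of_mem (fun n => |g n x|) fun n hn => (ht hn).1]
      using hs _ hdisj x
  · refine ⟨(Finset.range N).subtype (· ∈ A), fun t ht x => ?_⟩
    have hsub : ↑(t.map (Function.Embedding.subtype (· ∈ A))) ⊆ A \ Set.Iio N := by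
      intro n hn
      obtain ⟨n, hnt, rfl⟩ := Finset.mem_map.mp hn
      refine ⟨n.2, fun hlt => Finset.disjoint_left.mp ht hnt ?_⟩
      exact Finset.mem_subtype.mpr (Finset.mem_range.mpr hlt)
    simpa only [Finset.sum_map, Function.Embedding.coe_subtype] using hN x _ hsub

theorem summable_subtype_iff_tendsto_supMass (g : ℕ → C₀(X, ℝ)) (A : Set ℕ) :
    Summable (fun n : A => g n) ↔
      Tendsto (fun N => supMass (fun x n => |g n x|) (A \ Set.Iio N)) atTop (𝓝 0) :=
  (summable_subtype_iff_vanishing_tail g A).trans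
    (tendsto_supMass_diff_Iio_iff (fun _ _ => abs_nonneg _) A).symm

end ZeroAtInftyContinuousMap

theorem stmt9_general (J : Set (Set ℕ)) :
    (∃ h : ℕ → C₀(ℕ, ℝ), ∀ A : Set ℕ, A ∈ J ↔ Summable (fun n : A => h n)) ↔
    (∃ m : ℕ → ℕ → ℝ,
      (∀ k n : ℕ, 0 ≤ m k n) ∧
      (∀ n : ℕ, {k : ℕ | m k n ≠ 0}.Finite) ∧
      ∀ A : Set ℕ, A ∈ J ↔
        Tendsto
          (fun N : ℕ => ⨆ k : ℕ, ∑' n : ↥(A \ Set.Iio N), ENNReal.ofReal (m k ↑n))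
          atTop (𝓝 0)) := by
  constructor
  · rintro ⟨h, hJ⟩
    choose g hg_fin hg_near using fun n : ℕ =>
      ZeroAtInftyContinuousMap.exists_finite_support_norm_sub_le (h n)
        (pow_pos (one_half_pos (α := ℝ)) n)
    have hsub : Summable fun n => h n - g n := .of_norm_bounded summable_geometric_two hg_near
    refine ⟨fun k n => |g n k|, fun _ _ => abs_nonneg _,
      fun n => (hg_fin n).subset fun _ hk => abs_ne_zero.mp hk, fun A => ?_⟩
    exact (hJ A).trans <| (summable_iff_of_summable_sub (hsub.subtype A)).trans
      (ZeroAtInftyContinuousMap.summable_subtype_iff_tendsto_supMass g A)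
  · rintro ⟨m, hm, hm_fin, hJ⟩
    set g : ℕ → C₀(ℕ, ℝ) := fun n =>
      ZeroAtInftyContinuousMap.ofFiniteSupport (fun k => m k n) (hm_fin n)
    have hg : (fun k n => |g n k|) = m := funext₂ fun k n => abs_of_nonneg (hm k n)
    refine ⟨g, fun A => ?_⟩
    rw [hJ A, ZeroAtInftyContinuousMap.summable_subtype_iff_tendsto_supMass, hg]
    rfl

/-- an ideal `J` on ℕ is representable in `c₀` iff `J = Exh(φ)` for a
supremum `φ` of countably many measures such that every point carries nonzero mass for
only finitely many of them. -/
theorem stmt9 (J : Set (Set ℕ))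
    (hfin : ∀ A : Set ℕ, A.Finite → A ∈ J)
    (hdown : ∀ A B : Set ℕ, A ⊆ B → B ∈ J → A ∈ J)
    (hunion : ∀ A B : Set ℕ, A ∈ J → B ∈ J → A ∪ B ∈ J)
    (hproper : Set.univ ∉ J) :
    (∃ h : ℕ → C₀(ℕ, ℝ), ∀ A : Set ℕ, A ∈ J ↔ Summable (fun n : A => h n)) ↔
    (∃ m : ℕ → ℕ → ℝ,
      (∀ k n : ℕ, 0 ≤ m k n) ∧
      (∀ n : ℕ, {k : ℕ | m k n ≠ 0}.Finite) ∧
      ∀ A : Set ℕ, A ∈ J ↔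
        Tendsto
          (fun N : ℕ => ⨆ k : ℕ, ∑' n : ↥(A \ Set.Iio N), ENNReal.ofReal (m k ↑n))
          atTop (𝓝 0)) :=
  stmt9_general J
end

section
/- Let J be an ideal on ℕ which is representable in c₀ (there exists h : ℕ → c₀ such that for every A ⊆ ℕ, A ∈ J iff ∑_{n∈A} h(n) converges unconditionally in c₀) and totally bounded (for every lower semicontinuous submeasure φ on ℕ with J = Exh(φ), one has φ(ℕ) < ∞). Then J is a generalized density ideal: there exist a sequence (φ_j)_{j∈ℕ} of submeasures on ℕ and pairwise disjoint finite sets S_j ⊆ ℕ with φ_j(A) = φ_j(A ∩ S_j) for all A, such that J = {A ⊆ ℕ : φ_j(A) → 0 as j → ∞}. -/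
/-!
Write `h n (k)` for the `k`-th coordinate of `h n ∈ c₀` and `ψ(B) = sup_k ∑_{n ∈ B} |h n (k)|`.
Splitting a finite `F` by the sign of the `k`-th coordinates gives
`‖∑_{n∈F} h n‖ ≤ ψ(F) ≤ 2 sup_{G ⊆ F} ‖∑_{n∈G} h n‖`, so by the Cauchy criterion
`∑_{n∈A} h n` converges unconditionally iff `ψ(A \ [0,N)) → 0`: the ideal is `Exh(ψ)` for the
lsc submeasure `ψ`. Total boundedness gives `ψ(ℕ) < ∞`, so every row `(|h n (k)|)_n` is
summable, while every column `(|h n (k)|)_k` tends to `0` because `h n ∈ c₀`. Hence one can choose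
`N₀ < N₁ < ⋯` and `0 = K₀ < K₁ < ⋯` such that rows `i < K j` carry mass `≤ 2⁻ʲ` beyond
`N (j+1)` and rows `i ≥ K (j+1)` carry mass `≤ 2⁻ʲ` below `N (j+1)`. A row in
`[K (j+1), K (j+2))` then lives, up to `2 · 2⁻ʲ`, on the two blocks `[N (j+1), N (j+3))`, so
`ψ(A \ [0,N)) → 0` iff `ψ(A ∩ [N j, N (j+1))) → 0`.
-/

open Filter Topology Set
open scoped ZeroAtInfty ENNReal

namespace ZeroAtInftyContinuousMap

variable {α β : Type*} [TopologicalSpace α]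

theorem sum_apply [AddCommMonoid β] [TopologicalSpace β] [ContinuousAdd β] {ι : Type*}
    (s : Finset ι) (f : ι → C₀(α, β)) (x : α) : (∑ i ∈ s, f i) x = ∑ i ∈ s, f i x :=
  map_sum ({ toFun := fun g => g x, map_zero' := rfl, map_add' := fun _ _ => rfl } :
    C₀(α, β) →+ β) f s

theorem enorm_eq_iSup_enorm [SeminormedAddCommGroup β] (f : C₀(α, β)) : ‖f‖ₑ = ⨆ x, ‖f x‖ₑ :=
  f.toBCF.enorm_eq_iSup_enorm

theorem enorm_apply_le [SeminormedAddCommGroup β] (f : C₀(α, β)) (x : α) : ‖f x‖ₑ ≤ ‖f‖ₑ :=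
  f.enorm_eq_iSup_enorm ▸ le_iSup (fun x => ‖f x‖ₑ) x

theorem tendsto_enorm_apply_atTop [NormedAddCommGroup β] (f : C₀(ℕ, β)) :
    Tendsto (fun k => ‖f k‖ₑ) atTop (𝓝 0) := by
  simpa [cocompact_eq_atTop] using f.zero_at_infty'.enorm

end ZeroAtInftyContinuousMap

theorem Real.enorm_sum_of_nonneg {ι : Type*} {x : ι → ℝ} {s : Finset ι} (hx : ∀ n ∈ s, 0 ≤ x n) :
    ‖∑ n ∈ s, x n‖ₑ = ∑ n ∈ s, ‖x n‖ₑ := by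
  rw [Real.enorm_eq_ofReal (Finset.sum_nonneg hx), ENNReal.ofReal_sum_of_nonneg hx]
  exact Finset.sum_congr rfl fun n hn => (Real.enorm_eq_ofReal (hx n hn)).symm

theorem Real.sum_enorm_eq {ι : Type*} (x : ι → ℝ) (F : Finset ι) :
    ∑ n ∈ F, ‖x n‖ₑ = ‖∑ n ∈ F with 0 ≤ x n, x n‖ₑ + ‖∑ n ∈ F with ¬0 ≤ x n, x n‖ₑ := by
  rw [← F.sum_filter_add_sum_filter_not (0 ≤ x ·), Real.enorm_sum_of_nonneg, ← enorm_neg,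
    ← Finset.sum_neg_distrib, Real.enorm_sum_of_nonneg]
  · simp_rw [enorm_neg]
  · exact fun n hn => neg_nonneg.2 (not_le.1 (Finset.mem_filter.1 hn).2).le
  · exact fun n hn => (Finset.mem_filter.1 hn).2

section RowSum

variable {ι α : Type*} (w : ι → α → ℝ≥0∞)

noncomputable def rowSum (k : ι) (B : Set α) : ℝ≥0∞ := ∑' n : B, w k n

noncomputable def supRowSum (B : Set α) : ℝ≥0∞ := ⨆ k, rowSum w k B

theorem rowSum_finset (k : ι) (F : Finset α) : rowSum w k F = ∑ n ∈ F, w k n :=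
  F.tsum_subtype (w k)

theorem rowSum_mono (k : ι) {B C : Set α} (hBC : B ⊆ C) : rowSum w k B ≤ rowSum w k C :=
  ENNReal.tsum_mono_subtype (w k) hBC

theorem rowSum_union_le (k : ι) (B C : Set α) : rowSum w k (B ∪ C) ≤ rowSum w k B + rowSum w k C :=
  ENNReal.tsum_union_le (w k) B C

theorem rowSum_eq_iSup_finset (k : ι) (B : Set α) :
    rowSum w k B = ⨆ (F : Finset α) (_ : ↑F ⊆ B), rowSum w k F := by
  classical
  refine le_antisymm ?_ (iSup₂_le fun F hF => rowSum_mono w k hF)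
  rw [rowSum, tsum_subtype, ENNReal.tsum_eq_iSup_sum]
  refine iSup_le fun F =>
    le_iSup₂_of_le (F.filter (· ∈ B)) (fun _ hx => (Finset.mem_filter.1 hx).2) ?_
  rw [rowSum_finset, Finset.sum_indicator_eq_sum_filter]

theorem rowSum_le_supRowSum (k : ι) (B : Set α) : rowSum w k B ≤ supRowSum w B :=
  le_iSup (fun k => rowSum w k B) k

theorem supRowSum_empty : supRowSum w ∅ = 0 := by simp [supRowSum, rowSum]

theorem supRowSum_mono {B C : Set α} (hBC : B ⊆ C) : supRowSum w B ≤ supRowSum w C :=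
  iSup_mono fun k => rowSum_mono w k hBC

theorem supRowSum_union_le (B C : Set α) : supRowSum w (B ∪ C) ≤ supRowSum w B + supRowSum w C :=
  iSup_le fun k => (rowSum_union_le w k B C).trans
    (add_le_add (rowSum_le_supRowSum w k B) (rowSum_le_supRowSum w k C))

theorem supRowSum_singleton (n : α) : supRowSum w {n} = ⨆ k, w k n := by
  simp [supRowSum, rowSum]

theorem supRowSum_eq_iSup_finset (B : Set α) :
    supRowSum w B = ⨆ (F : Finset α) (_ : ↑F ⊆ B), supRowSum w F := by
  refine le_antisymm (iSup_le fun k => ?_) (iSup₂_le fun F hF => supRowSum_mono w hF)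
  rw [rowSum_eq_iSup_finset]
  exact iSup₂_mono fun F _ => rowSum_le_supRowSum w k F

end RowSum

section Blocks

variable (w : ℕ → ℕ → ℝ≥0∞)

theorem tendsto_rowSum_Ici (k : ℕ) (hk : rowSum w k univ ≠ ⊤) :
    Tendsto (fun N => rowSum w k (Ici N)) atTop (𝓝 0) := by
  rw [rowSum, tsum_univ] at hk
  refine ((ENNReal.tendsto_tsum_compl_atTop_zero hk).comp tendsto_finset_range).congr fun N => ?_
  exact (Equiv.subtypeEquivRight fun n => by simp).tsum_eq (fun n : Ici N => w k n)

theorem tendsto_rowSum_Iio (hcol : ∀ n, Tendsto (w · n) atTop (𝓝 0)) (N : ℕ) :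
    Tendsto (fun k => rowSum w k (Iio N)) atTop (𝓝 0) := by
  simp_rw [← Finset.coe_range, rowSum_finset]
  simpa using tendsto_finsetSum (Finset.range N) fun n _ => hcol n

structure IsBlocking (ε : ℕ → ℝ≥0∞) (N K : ℕ → ℕ) : Prop where
  strictMono_N : StrictMono N
  strictMono_K : StrictMono K
  K_zero : K 0 = 0
  tail_le : ∀ j, ∀ i < K j, rowSum w i (Ici (N (j + 1))) ≤ ε j
  head_le : ∀ j i, K (j + 1) ≤ i → rowSum w i (Iio (N (j + 1))) ≤ ε j

theorem exists_blocking_step (hrow : ∀ k, rowSum w k univ ≠ ⊤)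
    (hcol : ∀ n, Tendsto (w · n) atTop (𝓝 0)) {δ : ℝ≥0∞} (hδ : 0 < δ) (N K : ℕ) :
    ∃ N' K', N < N' ∧ K < K' ∧ (∀ i < K, rowSum w i (Ici N') ≤ δ) ∧
      ∀ i, K' ≤ i → rowSum w i (Iio N') ≤ δ := by
  have htail : ∀ᶠ N' in atTop, ∀ i ∈ Finset.range K, rowSum w i (Ici N') ≤ δ :=
    (eventually_all_finset _).2 fun i _ => (tendsto_rowSum_Ici w i (hrow i)).eventually_le_const hδ
  obtain ⟨N', hN', hNN'⟩ := (htail.and (eventually_gt_atTop N)).exists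
  obtain ⟨K', hK'⟩ := eventually_atTop.1 ((tendsto_rowSum_Iio w hcol N').eventually_le_const hδ)
  exact ⟨N', max K' (K + 1), hNN', by omega, fun i hi => hN' i (Finset.mem_range.2 hi),
    fun i hi => hK' i (le_of_max_le_left hi)⟩

theorem exists_isBlocking (hrow : ∀ k, rowSum w k univ ≠ ⊤)
    (hcol : ∀ n, Tendsto (w · n) atTop (𝓝 0)) {ε : ℕ → ℝ≥0∞} (hε : ∀ j, 0 < ε j) :
    ∃ N K, IsBlocking w ε N K := by
  choose N' K' hN hK htail hhead using fun j (p : ℕ × ℕ) =>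
    exists_blocking_step w hrow hcol (hε j) p.1 p.2
  let p : ℕ → ℕ × ℕ := fun j => Nat.rec (0, 0) (fun j q => (N' j q, K' j q)) j
  exact ⟨fun j => (p j).1, fun j => (p j).2, strictMono_nat_of_lt_succ fun j => hN j (p j),
    strictMono_nat_of_lt_succ fun j => hK j (p j), rfl, fun j => htail j (p j),
    fun j => hhead j (p j)⟩

end Blocks

namespace IsBlocking

variable {w : ℕ → ℕ → ℝ≥0∞} {ε : ℕ → ℝ≥0∞} {N K : ℕ → ℕ}

theorem exists_mem_Ico (hB : IsBlocking w ε N K) (k : ℕ) : ∃ j, K j ≤ k ∧ k < K (j + 1) := by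
  have hk : k ∈ ⋃ j, Ico (K j) (K (Order.succ j)) := by
    rw [iUnion_Ico_map_succ_eq_Ici (fun j => hB.strictMono_K.monotone bot_le)
      (hB.strictMono_K.not_bddAbove_range_of_wellFoundedLT)]
    simp [hB.K_zero]
  simpa using hk

theorem rowSum_diff_le_of_lt (hB : IsBlocking w ε N K) {j k : ℕ} (hk : k < K j) (A : Set ℕ) :
    rowSum w k (A \ Iio (N j)) ≤ supRowSum w (A ∩ Ico (N j) (N (j + 1))) + ε j := by
  have hcover : A \ Iio (N j) ⊆ (A ∩ Ico (N j) (N (j + 1))) ∪ Ici (N (j + 1)) := by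
    intro x ⟨hxA, hx⟩
    simp only [mem_Iio, not_lt] at hx
    by_cases hxj : x < N (j + 1)
    · exact Or.inl ⟨hxA, hx, hxj⟩
    · exact Or.inr (not_lt.1 hxj)
  calc rowSum w k (A \ Iio (N j))
      ≤ rowSum w k (A ∩ Ico (N j) (N (j + 1))) + rowSum w k (Ici (N (j + 1))) :=
        (rowSum_mono w k hcover).trans (rowSum_union_le w k _ _)
    _ ≤ _ := add_le_add (rowSum_le_supRowSum w k _) (hB.tail_le j k hk)

theorem rowSum_le_of_mem_Ico (hB : IsBlocking w ε N K) {j k : ℕ} (hk₁ : K (j + 1) ≤ k)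
    (hk₂ : k < K (j + 2)) (A : Set ℕ) :
    rowSum w k A ≤ ε j + supRowSum w (A ∩ Ico (N (j + 1)) (N (j + 2)))
      + supRowSum w (A ∩ Ico (N (j + 2)) (N (j + 3))) + ε (j + 2) := by
  have hcover : A ⊆ Iio (N (j + 1)) ∪ (A ∩ Ico (N (j + 1)) (N (j + 2)))
      ∪ (A ∩ Ico (N (j + 2)) (N (j + 3))) ∪ Ici (N (j + 3)) := by
    intro x hx
    simp only [mem_union, mem_inter_iff, mem_Iio, mem_Ico, mem_Ici, hx, true_and]
    omega
  calc rowSum w k A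
      ≤ rowSum w k (Iio (N (j + 1))) + rowSum w k (A ∩ Ico (N (j + 1)) (N (j + 2)))
        + rowSum w k (A ∩ Ico (N (j + 2)) (N (j + 3))) + rowSum w k (Ici (N (j + 3))) :=
        (rowSum_mono w k hcover).trans <| (rowSum_union_le w k _ _).trans <| add_le_add
          ((rowSum_union_le w k _ _).trans (add_le_add (rowSum_union_le w k _ _) le_rfl)) le_rfl
    _ ≤ _ := by
      gcongr
      · exact hB.head_le j k hk₁
      · exact rowSum_le_supRowSum w k _
      · exact rowSum_le_supRowSum w k _
      · exact hB.tail_le (j + 2) k hk₂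

theorem tendsto_supRowSum_diff_iff (hB : IsBlocking w ε N K) (hε : Tendsto ε atTop (𝓝 0))
    (A : Set ℕ) :
    Tendsto (fun n => supRowSum w (A \ Iio n)) atTop (𝓝 0) ↔
      Tendsto (fun j => supRowSum w (A ∩ Ico (N j) (N (j + 1)))) atTop (𝓝 0) := by
  refine ⟨fun hA => ?_, fun hA => ?_⟩
  · refine tendsto_of_tendsto_of_tendsto_of_le_of_le tendsto_const_nhds
      (hA.comp hB.strictMono_N.tendsto_atTop) (fun _ => zero_le) fun j => supRowSum_mono w ?_
    exact fun x ⟨hxA, hx, _⟩ => ⟨hxA, not_lt.2 hx⟩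
  rw [ENNReal.tendsto_atTop_zero]
  intro η hη
  set δ := η / 4
  have hδ : 0 < δ := ENNReal.div_pos hη.ne' (by norm_num)
  obtain ⟨m, hm⟩ := eventually_atTop.1 ((hA.eventually_le_const hδ).and (hε.eventually_le_const hδ))
  refine ⟨N (m + 1), fun n hn => ?_⟩
  have hsub : A \ Iio n ⊆ A \ Iio (N (m + 1)) := sdiff_subset_sdiff_right (Iio_subset_Iio hn)
  refine (supRowSum_mono w hsub).trans (iSup_le fun k => ?_)
  obtain ⟨j, hKj, hkK⟩ := hB.exists_mem_Ico k
  calc rowSum w k (A \ Iio (N (m + 1))) ≤ δ + δ + δ + δ := by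
        rcases le_or_gt j m with hjm | hmj
        · have hk : k < K (m + 1) := hkK.trans_le (hB.strictMono_K.monotone (by omega))
          refine (hB.rowSum_diff_le_of_lt hk A).trans ?_
          calc _ ≤ δ + δ := add_le_add (hm (m + 1) (by omega)).1 (hm (m + 1) (by omega)).2
            _ ≤ δ + δ + δ + δ := le_add_right (le_add_right le_rfl)
        · obtain ⟨j, rfl⟩ : ∃ j', j = j' + 1 := ⟨j - 1, by omega⟩
          refine (rowSum_mono w k sdiff_subset).trans ((hB.rowSum_le_of_mem_Ico hKj hkK A).trans ?_)
          gcongr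
          exacts [(hm j (by omega)).2, (hm (j + 1) (by omega)).1, (hm (j + 2) (by omega)).1,
            (hm (j + 2) (by omega)).2]
    _ = 4 * δ := by ring
    _ ≤ η := ENNReal.mul_div_le

end IsBlocking

section ZeroAtInfty

variable {α ι : Type*} [TopologicalSpace α]

theorem enorm_sum_le_supRowSum (h : ι → C₀(α, ℝ)) (F : Finset ι) :
    ‖∑ n ∈ F, h n‖ₑ ≤ supRowSum (fun k n => ‖h n k‖ₑ) F := by
  rw [ZeroAtInftyContinuousMap.enorm_eq_iSup_enorm]
  refine iSup_mono fun k => ?_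
  rw [ZeroAtInftyContinuousMap.sum_apply, rowSum_finset]
  exact enorm_sum_le _ _

theorem supRowSum_le_two_mul (h : ι → C₀(α, ℝ)) {B : Set ι} {δ : ℝ≥0∞}
    (hB : ∀ G : Finset ι, ↑G ⊆ B → ‖∑ n ∈ G, h n‖ₑ ≤ δ) :
    supRowSum (fun k n => ‖h n k‖ₑ) B ≤ 2 * δ := by
  classical
  refine iSup_le fun k => ?_
  rw [rowSum_eq_iSup_finset]
  refine iSup₂_le fun F hF => ?_
  have hsub : ∀ G ⊆ F, ‖∑ n ∈ G, h n k‖ₑ ≤ δ := fun G hG => by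
    rw [← ZeroAtInftyContinuousMap.sum_apply]
    exact (ZeroAtInftyContinuousMap.enorm_apply_le _ k).trans
      (hB G ((Finset.coe_subset.2 hG).trans hF))
  rw [rowSum_finset, Real.sum_enorm_eq, two_mul]
  exact add_le_add (hsub _ (Finset.filter_subset _ _)) (hsub _ (Finset.filter_subset _ _))

theorem summable_subtype_iff_tendsto_supRowSum (h : ℕ → C₀(α, ℝ)) (A : Set ℕ) :
    Summable (fun n : A => h n) ↔
      Tendsto (fun N => supRowSum (fun k n => ‖h n k‖ₑ) (A \ Iio N)) atTop (𝓝 0) := by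
  classical
  have hsum : ∀ t : Finset ℕ, ∑ n ∈ t, A.indicator h n = ∑ n ∈ t with n ∈ A, h n := fun t => by
    simp only [indicator_apply, Finset.sum_filter]
  rw [← Function.comp_def, summable_subtype_iff_indicator, summable_iff_vanishing]
  constructor
  · intro hA
    rw [ENNReal.tendsto_atTop_zero]
    intro η hη
    obtain ⟨s, hs⟩ := hA _ (Metric.eball_mem_nhds 0 (ENNReal.half_pos hη.ne'))
    obtain ⟨N, hN⟩ := s.exists_nat_subset_range
    refine ⟨N, fun n hn => (supRowSum_le_two_mul h fun G hG => ?_).trans ENNReal.mul_div_le⟩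
    have hGs : Disjoint G s := Finset.disjoint_of_subset_right hN <| Finset.disjoint_left.2
      fun x hx hxN => (hG hx).2 ((Finset.mem_range.1 hxN).trans_le hn)
    have hGA : G.filter (· ∈ A) = G := Finset.filter_true_of_mem fun x hx => (hG hx).1
    have hsmall := hs G hGs
    rw [Metric.mem_eball, edist_zero_right, hsum, hGA] at hsmall
    exact hsmall.le
  · intro hA e he
    obtain ⟨r, hr, hball⟩ := EMetric.mem_nhds_iff.1 he
    obtain ⟨N, hN⟩ := eventually_atTop.1 (hA.eventually_lt_const hr)
    refine ⟨Finset.range N, fun t ht => hball ?_⟩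
    rw [Metric.mem_eball, edist_zero_right, hsum]
    refine ((enorm_sum_le_supRowSum h _).trans (supRowSum_mono _ ?_)).trans_lt (hN N le_rfl)
    intro x hx
    simp only [Finset.coe_filter] at hx
    exact ⟨hx.2, fun hxN => Finset.disjoint_left.1 ht hx.1 (Finset.mem_range.2 hxN)⟩

end ZeroAtInfty

theorem stmt11_general (J : Set (Set ℕ))
    (hrep : ∃ h : ℕ → C₀(ℕ, ℝ), ∀ A : Set ℕ, A ∈ J ↔ Summable (fun n : A => h n))
    (htb : ∀ φ : Set ℕ → ENNReal,
      φ ∅ = 0 →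
      (∀ A B : Set ℕ, A ⊆ B → φ A ≤ φ B) →
      (∀ A B : Set ℕ, φ (A ∪ B) ≤ φ A + φ B) →
      (∀ n : ℕ, φ {n} < ⊤) →
      (∀ A : Set ℕ, φ A = ⨆ (F : Finset ℕ) (_ : ↑F ⊆ A), φ ↑F) →
      (∀ A : Set ℕ, A ∈ J ↔ Tendsto (fun N : ℕ => φ (A \ Set.Iio N)) atTop (𝓝 0)) →
      φ Set.univ < ⊤) :
    ∃ (φs : ℕ → Set ℕ → ENNReal) (S : ℕ → Finset ℕ),
      (∀ i j : ℕ, i ≠ j → Disjoint (S i) (S j)) ∧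
      (∀ j : ℕ, φs j ∅ = 0) ∧
      (∀ j : ℕ, ∀ A B : Set ℕ, A ⊆ B → φs j A ≤ φs j B) ∧
      (∀ j : ℕ, ∀ A B : Set ℕ, φs j (A ∪ B) ≤ φs j A + φs j B) ∧
      (∀ j : ℕ, ∀ A : Set ℕ, φs j A = φs j (A ∩ ↑(S j))) ∧
      (∀ A : Set ℕ, A ∈ J ↔ Tendsto (fun j : ℕ => φs j A) atTop (𝓝 0)) := by
  obtain ⟨h, hrep⟩ := hrep
  set w : ℕ → ℕ → ℝ≥0∞ := fun k n => ‖h n k‖ₑ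
  have hJ (A : Set ℕ) : A ∈ J ↔ Tendsto (fun N => supRowSum w (A \ Iio N)) atTop (𝓝 0) :=
    (hrep A).trans (summable_subtype_iff_tendsto_supRowSum h A)
  have hsingleton (n : ℕ) : supRowSum w {n} < ⊤ := by
    rw [supRowSum_singleton]
    exact (iSup_le fun k => (h n).enorm_apply_le k).trans_lt enorm_lt_top
  have hfinite := htb (supRowSum w) (supRowSum_empty w) (fun _ _ => supRowSum_mono w)
    (supRowSum_union_le w) hsingleton (supRowSum_eq_iSup_finset w) hJ
  obtain ⟨N, K, hB⟩ := exists_isBlocking w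
    (fun k => ((rowSum_le_supRowSum w k univ).trans_lt hfinite).ne)
    (fun n => (h n).tendsto_enorm_apply_atTop) (ε := fun j => 2⁻¹ ^ j)
    fun j => ENNReal.pow_pos (by norm_num) j
  refine ⟨fun j A => supRowSum w (A ∩ Ico (N j) (N (j + 1))),
    fun j => Finset.Ico (N j) (N (j + 1)),
    fun i j hij => ?_, fun j => by simp [supRowSum_empty], fun j A B hAB => ?_,
    fun j A B => ?_, fun j A => by simp [inter_assoc], fun A => (hJ A).trans ?_⟩
  · rw [← Finset.disjoint_coe, Finset.coe_Ico, Finset.coe_Ico]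
    exact hB.strictMono_N.monotone.pairwise_disjoint_on_Ico_succ hij
  · exact supRowSum_mono w (inter_subset_inter_left _ hAB)
  · simpa only [union_inter_distrib_right] using supRowSum_union_le w _ _
  · exact hB.tendsto_supRowSum_diff_iff
      (ENNReal.tendsto_pow_atTop_nhds_zero_of_lt_one (by norm_num)) A

/-- a totally bounded ideal representable in `c₀` is a generalized density
ideal. -/
theorem stmt11 (J : Set (Set ℕ))
    (hfin : ∀ A : Set ℕ, A.Finite → A ∈ J)
    (hdown : ∀ A B : Set ℕ, A ⊆ B → B ∈ J → A ∈ J)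
    (hunion : ∀ A B : Set ℕ, A ∈ J → B ∈ J → A ∪ B ∈ J)
    (hproper : Set.univ ∉ J)
    (hrep : ∃ h : ℕ → C₀(ℕ, ℝ), ∀ A : Set ℕ, A ∈ J ↔ Summable (fun n : A => h n))
    (htb : ∀ φ : Set ℕ → ENNReal,
      φ ∅ = 0 →
      (∀ A B : Set ℕ, A ⊆ B → φ A ≤ φ B) →
      (∀ A B : Set ℕ, φ (A ∪ B) ≤ φ A + φ B) →
      (∀ n : ℕ, φ {n} < ⊤) →
      (∀ A : Set ℕ, φ A = ⨆ (F : Finset ℕ) (_ : ↑F ⊆ A), φ ↑F) →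
      (∀ A : Set ℕ, A ∈ J ↔ Tendsto (fun N : ℕ => φ (A \ Set.Iio N)) atTop (𝓝 0)) →
      φ Set.univ < ⊤) :
    ∃ (φs : ℕ → Set ℕ → ENNReal) (S : ℕ → Finset ℕ),
      (∀ i j : ℕ, i ≠ j → Disjoint (S i) (S j)) ∧
      (∀ j : ℕ, φs j ∅ = 0) ∧
      (∀ j : ℕ, ∀ A B : Set ℕ, A ⊆ B → φs j A ≤ φs j B) ∧
      (∀ j : ℕ, ∀ A B : Set ℕ, φs j (A ∪ B) ≤ φs j A + φs j B) ∧
      (∀ j : ℕ, ∀ A : Set ℕ, φs j A = φs j (A ∩ ↑(S j))) ∧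
      (∀ A : Set ℕ, A ∈ J ↔ Tendsto (fun j : ℕ => φs j A) atTop (𝓝 0)) :=
  stmt11_general J hrep htb
end
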